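/- arXiv:2402.13479 — 9 statements merged into one kernel-verified Lean document; each statement's English description precedes it below -/
import Mathlib

section
/- Let H and K be complex Hilbert spaces, A a bounded operator on H, B a bounded operator on K, and C a bounded operator from H to K. The block operator T = [[A, C*],[C, B]] on H ⊕ K is positive (self-adjoint with ⟨Tξ,ξ⟩ ≥ 0 for all ξ) if and only if A ≥ 0, B ≥ 0, and |⟨Cu, v⟩|² ≤ ⟨Au, u⟩ · ⟨Bv, v⟩ for all u ∈ H and v ∈ K. -/
open scoped ComplexOrder
open ContinuousLinearMap (adjoint)

variable {H K : Type*} [NormedAddCommGroup H] [InnerProductSpace ℂ H] [CompleteSpace H]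
  [NormedAddCommGroup K] [InnerProductSpace ℂ K] [CompleteSpace K]
theorem block_positive_iff (A : H →L[ℂ] H) (B : K →L[ℂ] K) (C : H →L[ℂ] K) :
    (∀ (x : H) (y : K),
        0 ≤ (inner ℂ (A x + adjoint C y) x : ℂ) + (inner ℂ (C x + B y) y : ℂ)) ↔
      (∀ u : H, 0 ≤ (inner ℂ (A u) u : ℂ)) ∧ (∀ v : K, 0 ≤ (inner ℂ (B v) v : ℂ)) ∧
        ∀ (u : H) (v : K),
          ‖(inner ℂ (C u) v : ℂ)‖ ^ 2 ≤ (inner ℂ (A u) u : ℂ).re * (inner ℂ (B v) v : ℂ).re := by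
  constructor
  · intro h
    have hA : ∀ u : H, 0 ≤ (inner ℂ (A u) u : ℂ) := by
      intro u
      have := h u 0
      simpa using this
    have hB : ∀ v : K, 0 ≤ (inner ℂ (B v) v : ℂ) := by
      intro v
      have := h 0 v
      simpa using this
    refine ⟨hA, hB, ?_⟩
    intro u v
    set c : ℂ := inner ℂ (C u) v with hc
    set a : ℝ := (inner ℂ (A u) u : ℂ).re with ha
    set b : ℝ := (inner ℂ (B v) v : ℂ).re with hb
    have ha0 : 0 ≤ a := by simpa using (Complex.le_def.mp (hA u)).1
    have hb0 : 0 ≤ b := by simpa using (Complex.le_def.mp (hB v)).1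
    have haim : (inner ℂ (A u) u : ℂ).im = 0 := ((Complex.le_def.mp (hA u)).2).symm
    have hbim : (inner ℂ (B v) v : ℂ).im = 0 := ((Complex.le_def.mp (hB v)).2).symm
    by_cases hc0 : c = 0
    · simp [hc0]
      exact mul_nonneg ha0 hb0
    · have hnc : (‖c‖ : ℝ) ≠ 0 := norm_ne_zero_iff.mpr hc0
      have hquad : ∀ t : ℝ, 0 ≤ a * (t * t) + (-(2 * ‖c‖)) * t + b := by
        intro t
        set s : ℂ := (t : ℂ) * (-c / ‖c‖) with hs
        have hE := h (s • u) v
        have hnc' : ((‖c‖ : ℝ) : ℂ) ≠ 0 := by exact_mod_cast hnc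
        have hcc : (starRingEnd ℂ) c * c = ((‖c‖ ^ 2 : ℝ) : ℂ) := by
          rw [mul_comm, Complex.mul_conj, Complex.normSq_eq_norm_sq]
        have hca : ‖c‖ ≠ 0 := hnc
        have hnorm : ‖s‖ = |t| := by
          rw [hs]
          simp [norm_div, abs_of_nonneg (norm_nonneg c), hnc, div_self hca]
        have h1 : (starRingEnd ℂ) s * s = ((t * t : ℝ) : ℂ) := by
          rw [mul_comm, Complex.mul_conj, Complex.normSq_eq_norm_sq, hnorm]
          norm_cast
          rw [sq_abs]
          ring
        have h2 : (starRingEnd ℂ) s * c = ((-(t * ‖c‖) : ℝ) : ℂ) := by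
          calc (starRingEnd ℂ) s * c
              = -((t:ℂ) * ((starRingEnd ℂ) c * c)) / ((‖c‖ : ℝ) : ℂ) := by
                rw [hs]
                simp only [map_mul, map_div₀, map_neg, Complex.conj_ofReal]
                ring
            _ = -((t:ℂ) * ((‖c‖ ^ 2 : ℝ) : ℂ)) / ((‖c‖ : ℝ) : ℂ) := by rw [hcc]
            _ = ((-(t * ‖c‖) : ℝ) : ℂ) := by
                rw [div_eq_iff hnc']
                push_cast
                ring
        have hexp : (inner ℂ (A (s • u) + adjoint C v) (s • u) : ℂ) + (inner ℂ (C (s • u) + B v) v : ℂ)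
            = (starRingEnd ℂ) s * s * inner ℂ (A u) u + (starRingEnd ℂ) ((starRingEnd ℂ) s * c)
              + (starRingEnd ℂ) s * c + inner ℂ (B v) v := by
          simp only [map_smul, inner_add_left, inner_smul_left, inner_smul_right,
            ContinuousLinearMap.adjoint_inner_left, map_mul, RingHom.id_apply,
            ← inner_conj_symm v (C u), ← hc]
          ring_nf
          rw [Complex.conj_conj]
          ring
        rw [hexp, h1, h2] at hE
        have hre := (Complex.le_def.mp hE).1
        simp only [Complex.zero_re, Complex.add_re, Complex.mul_re, Complex.ofReal_re,
          Complex.ofReal_im, Complex.conj_re, Complex.conj_im, haim, ← ha, ← hb] at hre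
        nlinarith [hre]
      have hd := discrim_le_zero hquad
      rw [discrim] at hd
      nlinarith [hd]
  · rintro ⟨hA, hB, hC⟩ x y
    set c : ℂ := inner ℂ (C x) y with hc
    set a : ℝ := (inner ℂ (A x) x : ℂ).re with ha
    set b : ℝ := (inner ℂ (B y) y : ℂ).re with hb
    have ha0 : 0 ≤ a := by simpa using (Complex.le_def.mp (hA x)).1
    have hb0 : 0 ≤ b := by simpa using (Complex.le_def.mp (hB y)).1
    have haim : (inner ℂ (A x) x : ℂ).im = 0 := ((Complex.le_def.mp (hA x)).2).symm
    have hbim : (inner ℂ (B y) y : ℂ).im = 0 := ((Complex.le_def.mp (hB y)).2).symm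
    have hCle := hC x y
    rw [← hc, ← ha, ← hb] at hCle
    have hre : |c.re| ≤ ‖c‖ := by
      exact Complex.abs_re_le_norm c
    have hre2 : c.re ^ 2 ≤ a * b := by
      calc c.re ^ 2 = |c.re| ^ 2 := by rw [sq_abs]
        _ ≤ ‖c‖ ^ 2 := pow_le_pow_left₀ (abs_nonneg _) hre 2
        _ ≤ a * b := hCle
    have hexp : (inner ℂ (A x + adjoint C y) x : ℂ) + (inner ℂ (C x + B y) y : ℂ)
        = inner ℂ (A x) x + ((starRingEnd ℂ) c + c) + inner ℂ (B y) y := by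
      simp only [inner_add_left, ContinuousLinearMap.adjoint_inner_left,
        ← inner_conj_symm y (C x), ← hc]
      try ring
    rw [hexp]
    rw [Complex.le_def]
    constructor
    · simp only [Complex.zero_re, Complex.add_re, Complex.conj_re, ← ha, ← hb]
      nlinarith [sq_nonneg (a - b), sq_nonneg (a + b + 2 * c.re), hre2]
    · simp [Complex.add_im, haim, hbim]
end

section
/- Let H and K be complex Hilbert spaces and let T = [[A, C*],[C, B]] be a positive block operator on H ⊕ K, where A ∈ B(H), B ∈ B(K), C ∈ B(H,K). Then ‖C‖ ≤ (1/2)‖T‖. -/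
open scoped ComplexOrder
open ContinuousLinearMap (adjoint)

variable {H K : Type*} [NormedAddCommGroup H] [InnerProductSpace ℂ H] [CompleteSpace H]
  [NormedAddCommGroup K] [InnerProductSpace ℂ K] [CompleteSpace K]
theorem offdiag_norm_le_half (A : H →L[ℂ] H) (B : K →L[ℂ] K) (C : H →L[ℂ] K)
    (T : WithLp 2 (H × K) →L[ℂ] WithLp 2 (H × K))
    (hT : ∀ (x : H) (y : K), T ((WithLp.equiv 2 (H × K)).symm (x, y)) =
      (WithLp.equiv 2 (H × K)).symm (A x + adjoint C y, C x + B y))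
    (hpos : ∀ ξ : WithLp 2 (H × K), 0 ≤ (inner ℂ (T ξ) ξ : ℂ)) :
    ‖C‖ ≤ (1 / 2) * ‖T‖ := by
  have hTnn : (0:ℝ) ≤ ‖T‖ := norm_nonneg T
  apply ContinuousLinearMap.opNorm_le_bound C (by positivity)
  intro x
  by_cases hCx : C x = 0
  · rw [hCx, norm_zero]
    exact mul_nonneg (mul_nonneg (by norm_num) hTnn) (norm_nonneg x)
  have hx : x ≠ 0 := by rintro rfl; simp at hCx
  have hxn : (0:ℝ) < ‖x‖ := norm_pos_iff.mpr hx
  have hCn : (0:ℝ) < ‖C x‖ := norm_pos_iff.mpr hCx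
  set y : K := ((‖x‖ / ‖C x‖ : ℝ) : ℂ) • C x with hy
  have hyn : ‖y‖ = ‖x‖ := by
    rw [hy, norm_smul]
    simp [abs_of_nonneg (div_nonneg hxn.le hCn.le), div_mul_cancel₀ _ hCn.ne']
  have hinner : (inner ℂ (C x) y : ℂ) = (‖x‖ * ‖C x‖ : ℝ) := by
    rw [hy, inner_smul_right]
    rw [@inner_self_eq_norm_sq_to_K ℂ]
    push_cast
    field_simp
    rfl
  -- key: value of quadratic form at (x, ±y)
  have key : ∀ (y' : K), (inner ℂ (T ((WithLp.equiv 2 (H × K)).symm (x, y')))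
      ((WithLp.equiv 2 (H × K)).symm (x, y')) : ℂ) =
      inner ℂ (A x) x + inner ℂ (adjoint C y') x + inner ℂ (C x) y' + inner ℂ (B y') y' := by
    intro y'
    rw [hT]
    rw [WithLp.prod_inner_apply]
    simp [inner_add_left]
    ring
  set ξp := (WithLp.equiv 2 (H × K)).symm (x, y) with hxp
  set ξm := (WithLp.equiv 2 (H × K)).symm (x, -y) with hxm
  have hnormp : ‖ξp‖ ^ 2 = 2 * ‖x‖ ^ 2 := by
    rw [WithLp.prod_norm_sq_eq_of_L2]
    simp [hxp, hyn]; ring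
  have hadj : (inner ℂ (adjoint C y) x : ℂ) = (‖x‖ * ‖C x‖ : ℝ) := by
    rw [ContinuousLinearMap.adjoint_inner_left, ← inner_conj_symm, hinner]
    simp
  have hdiff : (inner ℂ (T ξp) ξp : ℂ) - inner ℂ (T ξm) ξm = 4 * (‖x‖ * ‖C x‖ : ℝ) := by
    rw [hxp, hxm, key, key, hadj]
    simp only [inner_neg_left, inner_neg_right, map_neg, hinner, hadj]
    push_cast
    ring
  -- real parts
  have hp := hpos ξp
  have hm := hpos ξm
  have hub : Complex.re (inner ℂ (T ξp) ξp : ℂ) ≤ 2 * ‖T‖ * ‖x‖ ^ 2 := by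
    calc Complex.re (inner ℂ (T ξp) ξp : ℂ) ≤ ‖(inner ℂ (T ξp) ξp : ℂ)‖ :=
          Complex.re_le_norm _
    _ = ‖(inner ℂ (T ξp) ξp : ℂ)‖ := rfl
    _ ≤ ‖T ξp‖ * ‖ξp‖ := norm_inner_le_norm _ _
    _ ≤ (‖T‖ * ‖ξp‖) * ‖ξp‖ := by
        gcongr; exact T.le_opNorm ξp
    _ = ‖T‖ * ‖ξp‖ ^ 2 := by ring
    _ = 2 * ‖T‖ * ‖x‖ ^ 2 := by rw [hnormp]; ring
  have hmre : 0 ≤ Complex.re (inner ℂ (T ξm) ξm : ℂ) := by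
    have := hm; rw [Complex.le_def] at this; simpa using this.1
  have hre : (4 : ℝ) * (‖x‖ * ‖C x‖) =
      Complex.re (inner ℂ (T ξp) ξp : ℂ) - Complex.re (inner ℂ (T ξm) ξm : ℂ) := by
    have := congrArg Complex.re hdiff
    simpa using this.symm
  have : (4 : ℝ) * (‖x‖ * ‖C x‖) ≤ 2 * ‖T‖ * ‖x‖ ^ 2 := by
    rw [hre]; linarith
  nlinarith [this, hxn]
end

section
/- Let U : H → K be a contraction between Hilbert spaces and C : H → K a bounded operator with C = U|C|. Then U*C = |C|. -/
/-!
Write `P = |C|`. Then `‖U (P x)‖ = ‖C x‖ = ‖P x‖`, so `U` preserves the norm of every vector in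
the range of `P`. A contraction `U` preserving the norm of `y` satisfies `U* U y = y`, since
`‖U* U y - y‖² = ‖U* U y‖² - 2 ‖U y‖² + ‖y‖² ≤ 0`. Hence `U* C = U* U P = P`.
-/

open scoped ComplexOrder
open ContinuousLinearMap (adjoint)

namespace ContinuousLinearMap

variable {𝕜 E F G : Type*} [RCLike 𝕜]
  [NormedAddCommGroup E] [InnerProductSpace 𝕜 E] [CompleteSpace E]
  [NormedAddCommGroup F] [InnerProductSpace 𝕜 F] [CompleteSpace F]
  [NormedAddCommGroup G] [InnerProductSpace 𝕜 G] [CompleteSpace G]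

theorem norm_apply_eq_of_adjoint_comp_self_eq {A : E →L[𝕜] F} {B : E →L[𝕜] G}
    (h : adjoint A ∘L A = adjoint B ∘L B) (x : E) : ‖A x‖ = ‖B x‖ := by
  rw [← sq_eq_sq₀ (norm_nonneg _) (norm_nonneg _), apply_norm_sq_eq_inner_adjoint_left,
    apply_norm_sq_eq_inner_adjoint_left, h]

theorem adjoint_apply_apply_eq_self {U : E →L[𝕜] F} (hU : ‖U‖ ≤ 1) {y : E}
    (hy : ‖U y‖ = ‖y‖) : adjoint U (U y) = y := by
  have hnorm : ‖adjoint U (U y)‖ ≤ ‖y‖ :=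
    calc ‖adjoint U (U y)‖ ≤ ‖adjoint U‖ * ‖U y‖ := le_opNorm _ _
      _ ≤ 1 * ‖y‖ := by rw [LinearIsometryEquiv.norm_map, hy]; gcongr
      _ = ‖y‖ := one_mul _
  have hinner : RCLike.re (inner 𝕜 (adjoint U (U y)) y) = ‖y‖ ^ 2 := by
    rw [adjoint_inner_left, inner_self_eq_norm_sq, hy]
  have hsq : ‖adjoint U (U y) - y‖ ^ 2 ≤ 0 := by
    rw [@norm_sub_sq 𝕜, hinner]
    nlinarith [norm_nonneg (adjoint U (U y))]
  rw [← sub_eq_zero, ← norm_le_zero_iff]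
  nlinarith [norm_nonneg (adjoint U (U y) - y)]

theorem norm_sqrt_adjoint_comp_self_apply {H K : Type*}
    [NormedAddCommGroup H] [InnerProductSpace ℂ H] [CompleteSpace H]
    [NormedAddCommGroup K] [InnerProductSpace ℂ K] [CompleteSpace K]
    (C : H →L[ℂ] K) (x : H) : ‖CFC.sqrt (adjoint C ∘L C) x‖ = ‖C x‖ := by
  refine norm_apply_eq_of_adjoint_comp_self_eq ?_ x
  rw [← star_eq_adjoint, (CFC.sqrt_nonneg _).isSelfAdjoint.star_eq]
  exact CFC.sqrt_mul_sqrt_self _ ((nonneg_iff_isPositive _).mpr (isPositive_adjoint_comp_self C))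

end ContinuousLinearMap

variable {H K : Type*} [NormedAddCommGroup H] [InnerProductSpace ℂ H] [CompleteSpace H]
  [NormedAddCommGroup K] [InnerProductSpace ℂ K] [CompleteSpace K]
theorem adjoint_contraction_polar (U C : H →L[ℂ] K) (hU : ‖U‖ ≤ 1)
    (hC : C = U ∘L CFC.sqrt (adjoint C ∘L C)) :
    adjoint U ∘L C = CFC.sqrt (adjoint C ∘L C) := by
  set P := CFC.sqrt (adjoint C ∘L C)
  have hCP (x : H) : C x = U (P x) := congrArg (· x) hC
  ext x
  rw [ContinuousLinearMap.comp_apply, hCP]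
  refine ContinuousLinearMap.adjoint_apply_apply_eq_self hU ?_
  rw [← hCP, ContinuousLinearMap.norm_sqrt_adjoint_comp_self_apply]
end

section
/- Let T be a bounded operator on a complex Hilbert space H. Then for every α ∈ [0,2] and all x, y ∈ H, |⟨Tx, y⟩|² ≤ ⟨|T|^α x, x⟩ · ⟨|T*|^{2-α} y, y⟩, where |T| = (T*T)^{1/2}, |T*| = (TT*)^{1/2}, and powers are taken via the continuous functional calculus of positive operators. -/
open scoped ComplexOrder
open ContinuousLinearMap (adjoint)

open scoped NNReal

set_option maxHeartbeats 2000000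

section Aux

variable {H' : Type*} [NormedAddCommGroup H'] [InnerProductSpace ℂ H'] [CompleteSpace H']

lemma gms_intertwine_real (S P Q : H' →L[ℂ] H') (hP : IsSelfAdjoint P) (hQ : IsSelfAdjoint Q)
    (h : S * Q = P * S) (f : ℝ → ℝ) (hf : Continuous f) :
    S * cfc f Q = cfc f P * S := by
  set M : ℝ := max (‖P‖ * ‖(1:H' →L[ℂ] H')‖) (‖Q‖ * ‖(1:H' →L[ℂ] H')‖) with hM
  set K : Set ℝ := Set.Icc (-M) M with hK
  haveI : CompactSpace K := isCompact_iff_compactSpace.mp isCompact_Icc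
  have hPK : spectrum ℝ P ⊆ K := by
    refine (spectrum.subset_closedBall_norm_mul P).trans ?_
    rw [Real.closedBall_eq_Icc, zero_sub, zero_add]
    exact Set.Icc_subset_Icc (neg_le_neg (le_max_left _ _)) (le_max_left _ _)
  have hQK : spectrum ℝ Q ⊆ K := by
    refine (spectrum.subset_closedBall_norm_mul Q).trans ?_
    rw [Real.closedBall_eq_Icc, zero_sub, zero_add]
    exact Set.Icc_subset_Icc (neg_le_neg (le_max_right _ _)) (le_max_right _ _)
  let ιP : C(spectrum ℝ P, K) := ⟨fun t => ⟨t.1, hPK t.2⟩, Continuous.subtype_mk continuous_subtype_val _⟩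
  let ιQ : C(spectrum ℝ Q, K) := ⟨fun t => ⟨t.1, hQK t.2⟩, Continuous.subtype_mk continuous_subtype_val _⟩
  have key : ∀ g : C(K, ℝ), S * cfcHom hQ (g.comp ιQ) = cfcHom hP (g.comp ιP) * S := by
    intro g
    induction g using ContinuousMap.induction_on_of_compact with
    | const r =>
        have e1 : ∀ (s : Set ℝ) (ι : C(s, K)), (ContinuousMap.const K r).comp ι
            = algebraMap ℝ C(s, ℝ) r := fun _ _ => rfl
        rw [e1 _ ιP, e1 _ ιQ, AlgHomClass.commutes, AlgHomClass.commutes,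
          Algebra.algebraMap_eq_smul_one, smul_mul_assoc, mul_smul_comm, one_mul, mul_one]
    | id =>
        have e1 : ∀ (s : Set ℝ) (ι : C(s, K)) (hι : ∀ t, (ι t).1 = t.1),
            ((ContinuousMap.id ℝ).restrict K).comp ι = (ContinuousMap.id ℝ).restrict s := by
          intro s ι hι; ext t; exact hι t
        rw [e1 _ ιP (fun _ => rfl), e1 _ ιQ (fun _ => rfl), cfcHom_id hP, cfcHom_id hQ, h]
    | star_id =>
        rw [star_trivial]
        have e1 : ∀ (s : Set ℝ) (ι : C(s, K)) (hι : ∀ t, (ι t).1 = t.1),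
            ((ContinuousMap.id ℝ).restrict K).comp ι = (ContinuousMap.id ℝ).restrict s := by
          intro s ι hι; ext t; exact hι t
        rw [e1 _ ιP (fun _ => rfl), e1 _ ιQ (fun _ => rfl), cfcHom_id hP, cfcHom_id hQ, h]
    | add f g hfi hgi =>
        simp only [ContinuousMap.add_comp, map_add]
        rw [mul_add, add_mul, hfi, hgi]
    | mul f g hfi hgi =>
        simp only [ContinuousMap.mul_comp, map_mul]
        rw [← mul_assoc, hfi, mul_assoc, hgi, mul_assoc]
    | frequently f hfreq =>
        have hcl : IsClosed {g : C(K, ℝ) | S * cfcHom hQ (g.comp ιQ) = cfcHom hP (g.comp ιP) * S} := by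
          apply isClosed_eq
          · exact (continuous_mul_left S).comp
              ((cfcHom_isClosedEmbedding hQ).continuous.comp (ContinuousMap.continuous_precomp ιQ))
          · exact (continuous_mul_right S).comp
              ((cfcHom_isClosedEmbedding hP).continuous.comp (ContinuousMap.continuous_precomp ιP))
        exact hcl.closure_subset (mem_closure_iff_frequently.mpr hfreq)
  have happ : ∀ (R : H' →L[ℂ] H') (hR : IsSelfAdjoint R) (hs : spectrum ℝ R ⊆ K)
      (ι : C(spectrum ℝ R, K)) (hι : ∀ t, (ι t).1 = t.1),
      cfc f R = cfcHom hR ((⟨fun t : K => f t.1, hf.comp continuous_subtype_val⟩ : C(K, ℝ)).comp ι) := by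
    intro R hR hs ι hι
    rw [cfc_apply f R hR (hf.continuousOn)]
    congr 1
    ext t
    simp [hι t]
  rw [happ P hP hPK ιP (fun _ => rfl), happ Q hQ hQK ιQ (fun _ => rfl)]
  exact key _

lemma gms_intertwine_nnreal (S P Q : H' →L[ℂ] H') (hP : 0 ≤ P) (hQ : 0 ≤ Q)
    (h : S * Q = P * S) (f : ℝ≥0 → ℝ≥0) (hf : Continuous f) :
    S * cfc f Q = cfc f P * S := by
  rw [cfc_nnreal_eq_real f Q hQ, cfc_nnreal_eq_real f P hP]
  exact gms_intertwine_real S P Q (.of_nonneg hP) (.of_nonneg hQ) h _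
    (NNReal.continuous_coe.comp (hf.comp continuous_real_toNNReal))

lemma gms_rpow_add (t : ℝ≥0) {p q : ℝ} (hp : 0 ≤ p) (hq : 0 ≤ q) :
    t ^ p * t ^ q = t ^ (p + q) := by
  rcases hp.eq_or_lt with rfl | hp
  · simp
  rcases hq.eq_or_lt with rfl | hq
  · simp
  rcases eq_or_ne t 0 with rfl | ht
  · rw [NNReal.zero_rpow hp.ne', NNReal.zero_rpow (by positivity : p + q ≠ 0), zero_mul]
  · rw [NNReal.rpow_add ht]

lemma gms_rpow_sqrt_eq (a : H' →L[ℂ] H') (ha : 0 ≤ a) {r : ℝ} (hr : 0 ≤ r) :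
    CFC.rpow (CFC.sqrt a) r = cfc (fun t : ℝ≥0 => t ^ (r / 2)) a := by
  rw [CFC.sqrt_eq_cfc (a := a), show CFC.rpow (cfc NNReal.sqrt a) r
      = cfc (fun x : ℝ≥0 => x ^ r) (cfc NNReal.sqrt a) from rfl,
    ← cfc_comp (fun x : ℝ≥0 => x ^ r) NNReal.sqrt a ha
      ((NNReal.continuous_rpow_const hr).continuousOn) (NNReal.sqrt.continuous.continuousOn)]
  refine cfc_congr fun t _ => ?_
  show NNReal.sqrt t ^ r = t ^ (r / 2)
  rw [NNReal.sqrt_eq_rpow, ← NNReal.rpow_mul, show 1 / 2 * r = r / 2 by ring]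

lemma gms_selfadj_inner (C : H' →L[ℂ] H') (hC : IsSelfAdjoint C) (w x : H') :
    (inner ℂ (C w) x : ℂ) = inner ℂ w (C x) := by
  conv_lhs => rw [← hC.adjoint_eq]
  exact ContinuousLinearMap.adjoint_inner_left C x w

lemma gms_inner_sq (C : H' →L[ℂ] H') (hC : 0 ≤ C) {f : ℝ≥0 → ℝ≥0} {e : ℝ}
    (hf : Continuous f) (he : 0 ≤ e) (hfe : ∀ t, f t * f t = t ^ e) (x : H') :
    (inner ℂ (cfc (fun t : ℝ≥0 => t ^ e) C x) x : ℂ).re = ‖cfc f C x‖ ^ 2 := by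
  have h1 : cfc (fun t : ℝ≥0 => t ^ e) C = cfc f C * cfc f C := by
    rw [← cfc_mul f f C hf.continuousOn hf.continuousOn]
    exact cfc_congr fun t _ => (hfe t).symm
  rw [h1, ContinuousLinearMap.mul_apply,
    gms_selfadj_inner _ (IsSelfAdjoint.of_nonneg (cfc_predicate _ C)) _ x,
    ← RCLike.re_to_complex, inner_self_eq_norm_sq (𝕜 := ℂ) (cfc f C x)]

end Aux

variable {H K : Type*} [NormedAddCommGroup H] [InnerProductSpace ℂ H] [CompleteSpace H]
  [NormedAddCommGroup K] [InnerProductSpace ℂ K] [CompleteSpace K]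
theorem generalized_mixed_schwarz (T : H →L[ℂ] H) :
    ∀ α ∈ Set.Icc (0 : ℝ) 2, ∀ x y : H,
      ‖(inner ℂ (T x) y : ℂ)‖ ^ 2 ≤
        (inner ℂ (CFC.rpow (CFC.sqrt (adjoint T ∘L T)) α x) x : ℂ).re *
          (inner ℂ (CFC.rpow (CFC.sqrt (T ∘L adjoint T)) (2 - α) y) y : ℂ).re := by
  rintro α ⟨hα0, hα2⟩ x y
  set P : H →L[ℂ] H := adjoint T ∘L T with hPdef
  set Q : H →L[ℂ] H := T ∘L adjoint T with hQdef
  have hP : (0 : H →L[ℂ] H) ≤ P := by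
    rw [hPdef, ← ContinuousLinearMap.star_eq_adjoint, ← ContinuousLinearMap.mul_def]
    exact star_mul_self_nonneg T
  have hQ : (0 : H →L[ℂ] H) ≤ Q := by
    rw [hQdef, ← ContinuousLinearMap.star_eq_adjoint, ← ContinuousLinearMap.mul_def]
    exact mul_star_self_nonneg T
  set s : ℝ := α / 2 with hsdef
  have hs0 : 0 ≤ s := by positivity
  have hs1 : s ≤ 1 := by rw [hsdef]; linarith
  rw [gms_rpow_sqrt_eq P hP hα0, gms_rpow_sqrt_eq Q hQ (by linarith)]
  have hexpP : α / 2 = s := rfl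
  have hexpQ : (2 - α) / 2 = 1 - s := by rw [hsdef]; ring
  rw [hexpP, hexpQ]
  -- the two main vectors
  set u : H := cfc (fun t : ℝ≥0 => t ^ (s / 2)) P x with hu
  set v : H := cfc (fun t : ℝ≥0 => t ^ ((1 - s) / 2)) Q y with hv
  have hA : Continuous (fun t : ℝ≥0 => t ^ (s / 2)) := NNReal.continuous_rpow_const (by positivity)
  have hB : Continuous (fun t : ℝ≥0 => t ^ ((1 - s) / 2)) :=
    NNReal.continuous_rpow_const (by linarith)
  have hPinner : (inner ℂ (cfc (fun t : ℝ≥0 => t ^ s) P x) x : ℂ).re = ‖u‖ ^ 2 :=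
    gms_inner_sq P hP hA hs0 (fun t => by
      rw [gms_rpow_add t (by positivity) (by positivity), show s / 2 + s / 2 = s by ring]) x
  have hQinner : (inner ℂ (cfc (fun t : ℝ≥0 => t ^ (1 - s)) Q y) y : ℂ).re = ‖v‖ ^ 2 :=
    gms_inner_sq Q hQ hB (by linarith) (fun t => by
      rw [gms_rpow_add t (by linarith) (by linarith),
        show (1 - s) / 2 + (1 - s) / 2 = 1 - s by ring]) y
  rw [hPinner, hQinner]
  -- key inequality : ‖inner ℂ (T x) y‖ ≤ ‖u‖ * ‖v‖
  have key : ‖(inner ℂ (T x) y : ℂ)‖ ≤ ‖u‖ * ‖v‖ := by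
    have main : ∀ ε : ℝ≥0, 0 < ε →
        ‖(inner ℂ (T x) y : ℂ)‖ ≤ ‖u‖ * ‖v‖ + (ε : ℝ) * (‖x‖ * ‖y‖) := by
      intro ε hε
      -- the auxiliary functions
      set fe : ℝ≥0 → ℝ≥0 := fun t => (NNReal.sqrt t + ε)⁻¹ with hfe
      have hne : ∀ t : ℝ≥0, NNReal.sqrt t + ε ≠ 0 :=
        fun t => (add_pos_of_nonneg_of_pos zero_le hε).ne'
      have hcfe : Continuous fe :=
        Continuous.inv₀ (NNReal.sqrt.continuous.add continuous_const) hne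
      set fc : ℝ≥0 → ℝ≥0 := fun t => NNReal.sqrt t * fe t with hfc
      have hcfc : Continuous fc := NNReal.sqrt.continuous.mul hcfe
      have hfc_le : ∀ t, fc t ≤ 1 := by
        intro t
        rw [hfc]
        calc NNReal.sqrt t * fe t ≤ (NNReal.sqrt t + ε) * fe t :=
              mul_le_mul_left (le_add_right le_rfl) _
          _ = 1 := mul_inv_cancel₀ (hne t)
      set fd : ℝ≥0 → ℝ≥0 := fun t => ε * fc t with hfd
      have hcfd : Continuous fd := continuous_const.mul hcfc
      have hfd_le : ∀ t, fd t ≤ ε := fun t => by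
        calc fd t = ε * fc t := rfl
          _ ≤ ε * 1 := mul_le_mul_right (hfc_le t) _
          _ = ε := mul_one _
      set fa : ℝ≥0 → ℝ≥0 := fun t => t ^ (s / 2) with hfa
      set fb : ℝ≥0 → ℝ≥0 := fun t => t ^ ((1 - s) / 2) with hfb
      set fh : ℝ≥0 → ℝ≥0 := fun t => fb t * fe t with hfh
      have hcfh : Continuous fh := hB.mul hcfe
      -- norms through sqrt
      have hTnorm : ∀ z : H, ‖T z‖ = ‖cfc NNReal.sqrt P z‖ := by
        intro z
        have h1 : (inner ℂ (T z) (T z) : ℂ) = inner ℂ (P z) z := by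
          rw [hPdef, ContinuousLinearMap.comp_apply]
          exact (ContinuousLinearMap.adjoint_inner_left T z (T z)).symm
        have h2 : cfc NNReal.sqrt P * cfc NNReal.sqrt P = P := by
          rw [← cfc_mul _ _ P NNReal.sqrt.continuous.continuousOn
            NNReal.sqrt.continuous.continuousOn]
          calc cfc (fun t => NNReal.sqrt t * NNReal.sqrt t) P
              = cfc (fun t : ℝ≥0 => t) P := cfc_congr fun t _ => NNReal.mul_self_sqrt t
            _ = P := cfc_id' ℝ≥0 P
        have h3 : (inner ℂ (P z) z : ℂ) = inner ℂ (cfc NNReal.sqrt P z) (cfc NNReal.sqrt P z) := by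
          conv_lhs => rw [← h2]
          rw [ContinuousLinearMap.mul_apply,
            gms_selfadj_inner _ (IsSelfAdjoint.of_nonneg (cfc_predicate _ P)) _ z]
        have h4 := congrArg Complex.re (h1.trans h3)
        rw [← RCLike.re_to_complex, ← RCLike.re_to_complex,
          inner_self_eq_norm_sq (𝕜 := ℂ) (T z),
          inner_self_eq_norm_sq (𝕜 := ℂ) (cfc NNReal.sqrt P z)] at h4
        nlinarith [norm_nonneg (T z), norm_nonneg (cfc NNReal.sqrt P z)]
      have hT'norm : ∀ z : H, ‖adjoint T z‖ = ‖cfc NNReal.sqrt Q z‖ := by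
        intro z
        have h1 : (inner ℂ (adjoint T z) (adjoint T z) : ℂ) = inner ℂ (Q z) z := by
          rw [hQdef, ContinuousLinearMap.comp_apply]
          exact ContinuousLinearMap.adjoint_inner_right T (adjoint T z) z
        have h2 : cfc NNReal.sqrt Q * cfc NNReal.sqrt Q = Q := by
          rw [← cfc_mul _ _ Q NNReal.sqrt.continuous.continuousOn
            NNReal.sqrt.continuous.continuousOn]
          calc cfc (fun t => NNReal.sqrt t * NNReal.sqrt t) Q
              = cfc (fun t : ℝ≥0 => t) Q := cfc_congr fun t _ => NNReal.mul_self_sqrt t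
            _ = Q := cfc_id' ℝ≥0 Q
        have h3 : (inner ℂ (Q z) z : ℂ) = inner ℂ (cfc NNReal.sqrt Q z) (cfc NNReal.sqrt Q z) := by
          conv_lhs => rw [← h2]
          rw [ContinuousLinearMap.mul_apply,
            gms_selfadj_inner _ (IsSelfAdjoint.of_nonneg (cfc_predicate _ Q)) _ z]
        have h4 := congrArg Complex.re (h1.trans h3)
        rw [← RCLike.re_to_complex, ← RCLike.re_to_complex,
          inner_self_eq_norm_sq (𝕜 := ℂ) (adjoint T z),
          inner_self_eq_norm_sq (𝕜 := ℂ) (cfc NNReal.sqrt Q z)] at h4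
        nlinarith [norm_nonneg (adjoint T z), norm_nonneg (cfc NNReal.sqrt Q z)]
      -- split
      have hsplit : (inner ℂ (T x) y : ℂ)
          = inner ℂ (T (cfc fc P x)) y + inner ℂ (T (x - cfc fc P x)) y := by
        rw [← inner_add_left, ← map_add, add_sub_cancel]
      -- term 2 estimate
      have hterm2 : ‖(inner ℂ (T (x - cfc fc P x)) y : ℂ)‖ ≤ (ε : ℝ) * (‖x‖ * ‖y‖) := by
        have e1 : cfc NNReal.sqrt P (x - cfc fc P x) = cfc fd P x := by
          have e2 : cfc NNReal.sqrt P (cfc fc P x) = cfc (fun t => NNReal.sqrt t * fc t) P x := by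
            rw [cfc_mul _ _ P NNReal.sqrt.continuous.continuousOn hcfc.continuousOn,
              ContinuousLinearMap.mul_apply]
          have e3 : cfc NNReal.sqrt P = cfc (fun t => NNReal.sqrt t * fc t) P + cfc fd P := by
            rw [← cfc_add P (fun t => NNReal.sqrt t * fc t) _ (NNReal.sqrt.continuous.mul hcfc).continuousOn hcfd.continuousOn]
            refine cfc_congr fun t _ => ?_
            show NNReal.sqrt t = NNReal.sqrt t * fc t + fd t
            rw [hfd, hfc]
            calc NNReal.sqrt t
                = NNReal.sqrt t * ((NNReal.sqrt t + ε) * fe t) := by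
                  rw [hfe, mul_inv_cancel₀ (hne t), mul_one]
              _ = NNReal.sqrt t * (NNReal.sqrt t * fe t) + ε * (NNReal.sqrt t * fe t) := by ring
          rw [map_sub, e2, e3]
          simp only [ContinuousLinearMap.add_apply]
          abel
        have e4 : ‖T (x - cfc fc P x)‖ ≤ (ε : ℝ) * ‖x‖ := by
          rw [hTnorm _, e1]
          calc ‖cfc fd P x‖ ≤ ‖cfc fd P‖ * ‖x‖ := ContinuousLinearMap.le_opNorm _ _
            _ ≤ (ε : ℝ) * ‖x‖ := by
                refine mul_le_mul_of_nonneg_right ?_ (norm_nonneg x)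
                have : ‖cfc fd P‖₊ ≤ ε := nnnorm_cfc_nnreal_le fun t _ => hfd_le t
                exact_mod_cast this
        calc ‖(inner ℂ (T (x - cfc fc P x)) y : ℂ)‖ ≤ ‖T (x - cfc fc P x)‖ * ‖y‖ :=
            norm_inner_le_norm _ _
          _ ≤ ((ε : ℝ) * ‖x‖) * ‖y‖ := mul_le_mul_of_nonneg_right e4 (norm_nonneg y)
          _ = (ε : ℝ) * (‖x‖ * ‖y‖) := by ring
      -- term 1 estimate
      have hterm1 : ‖(inner ℂ (T (cfc fc P x)) y : ℂ)‖ ≤ ‖u‖ * ‖v‖ := by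
        have e1 : cfc fc P x = cfc fh P u := by
          rw [hu, ← ContinuousLinearMap.mul_apply, ← cfc_mul _ _ P hcfh.continuousOn hA.continuousOn]
          refine congrFun (congrArg _ (cfc_congr fun t _ => ?_)) x
          show fc t = fh t * fa t
          rw [hfh, hfc, hfb, hfa]
          calc NNReal.sqrt t * fe t = t ^ ((1:ℝ)/2) * fe t := by rw [NNReal.sqrt_eq_rpow]
            _ = t ^ ((1 - s)/2) * t ^ (s/2) * fe t := by
                rw [gms_rpow_add t (by linarith) (by positivity), show (1-s)/2 + s/2 = 1/2 by ring]
            _ = t ^ ((1 - s)/2) * fe t * t ^ (s/2) := by ring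
        have e2 : (inner ℂ (T (cfc fc P x)) y : ℂ) = inner ℂ u (adjoint T (cfc fe Q v)) := by
          rw [e1, ← ContinuousLinearMap.adjoint_inner_right T _ y,
            gms_selfadj_inner _ (IsSelfAdjoint.of_nonneg (cfc_predicate _ P)) u (adjoint T y)]
          congr 1
          have e3 : adjoint T * Q = P * adjoint T := by
            rw [hPdef, hQdef]
            exact (mul_assoc (adjoint T) T (adjoint T)).symm
          have e4 : cfc fh P (adjoint T y) = adjoint T (cfc fh Q y) := by
            have := gms_intertwine_nnreal (adjoint T) P Q hP hQ e3 fh hcfh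
            calc cfc fh P (adjoint T y) = (cfc fh P * adjoint T) y :=
                (ContinuousLinearMap.mul_apply _ _ _).symm
              _ = (adjoint T * cfc fh Q) y := by rw [this]
              _ = adjoint T (cfc fh Q y) := ContinuousLinearMap.mul_apply _ _ _
          have e5 : cfc fh Q y = cfc fe Q v := by
            rw [hv, ← ContinuousLinearMap.mul_apply, ← cfc_mul _ _ Q hcfe.continuousOn hB.continuousOn]
            refine congrFun (congrArg _ (cfc_congr fun t _ => ?_)) y
            show fh t = fe t * fb t
            rw [hfh]; ring
          rw [e4, e5]
        have e6 : ‖adjoint T (cfc fe Q v)‖ ≤ ‖v‖ := by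
          rw [hT'norm _]
          have e7 : cfc NNReal.sqrt Q (cfc fe Q v) = cfc fc Q v := by
            rw [← ContinuousLinearMap.mul_apply,
              ← cfc_mul _ _ Q NNReal.sqrt.continuous.continuousOn hcfe.continuousOn]
          rw [e7]
          calc ‖cfc fc Q v‖ ≤ ‖cfc fc Q‖ * ‖v‖ := ContinuousLinearMap.le_opNorm _ _
            _ ≤ 1 * ‖v‖ := by
                refine mul_le_mul_of_nonneg_right ?_ (norm_nonneg v)
                have : ‖cfc fc Q‖₊ ≤ 1 := nnnorm_cfc_nnreal_le fun t _ => hfc_le t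
                exact_mod_cast this
            _ = ‖v‖ := one_mul _
        calc ‖(inner ℂ (T (cfc fc P x)) y : ℂ)‖ = ‖(inner ℂ u (adjoint T (cfc fe Q v)) : ℂ)‖ := by
              rw [e2]
          _ ≤ ‖u‖ * ‖adjoint T (cfc fe Q v)‖ := norm_inner_le_norm _ _
          _ ≤ ‖u‖ * ‖v‖ := mul_le_mul_of_nonneg_left e6 (norm_nonneg u)
      calc ‖(inner ℂ (T x) y : ℂ)‖
          ≤ ‖(inner ℂ (T (cfc fc P x)) y : ℂ)‖ + ‖(inner ℂ (T (x - cfc fc P x)) y : ℂ)‖ := by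
            rw [hsplit]; exact norm_add_le _ _
        _ ≤ ‖u‖ * ‖v‖ + (ε : ℝ) * (‖x‖ * ‖y‖) := add_le_add hterm1 hterm2
    -- pass to the limit
    refine le_of_forall_pos_le_add fun δ hδ => ?_
    have hc : (0:ℝ) < ‖x‖ * ‖y‖ + 1 := by positivity
    have hε : 0 < Real.toNNReal (δ / (‖x‖ * ‖y‖ + 1)) := by
      rw [Real.toNNReal_pos]; positivity
    refine (main _ hε).trans ?_
    have : (Real.toNNReal (δ / (‖x‖ * ‖y‖ + 1)) : ℝ) * (‖x‖ * ‖y‖) ≤ δ := by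
      rw [Real.coe_toNNReal _ (by positivity)]
      rw [div_mul_eq_mul_div, div_le_iff₀ hc]
      nlinarith [norm_nonneg x, norm_nonneg y]
    linarith
  calc ‖(inner ℂ (T x) y : ℂ)‖ ^ 2 ≤ (‖u‖ * ‖v‖) ^ 2 := by
        have h0 : (0:ℝ) ≤ ‖(inner ℂ (T x) y : ℂ)‖ := norm_nonneg _
        nlinarith [norm_nonneg u, norm_nonneg v]
    _ = ‖u‖ ^ 2 * ‖v‖ ^ 2 := by ring
end

section
/- Let T be a bounded operator on a complex Hilbert space H with polar decomposition T = U|T|. For every α ∈ (0,1) there exists a bounded operator V on H such that T = V|T|^α, T* = V*|T*|^α, V*V = |T|^{2(1-α)}, V V* = |T*|^{2(1-α)}, and V|T|^β = |T*|^β V for every β > 0. -/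
set_option maxHeartbeats 1000000
set_option synthInstance.maxHeartbeats 200000

open scoped ComplexOrder
open ContinuousLinearMap (adjoint)

open scoped NNReal
open Filter

section gpdAux

variable {H : Type*} [NormedAddCommGroup H] [InnerProductSpace ℂ H] [CompleteSpace H]

lemma gpd_E {m e p : ℝ} (hm : 0 ≤ m) (he : 0 < e) (hp : 0 < p) (hp1 : p ≤ 1) :
    m ^ p * (e / (m + e)) ≤ e ^ p := by
  have hme : 0 < m + e := by linarith
  rw [← mul_div_assoc, div_le_iff₀ hme]
  rcases le_total m e with h | h
  · have h1 : m ^ p ≤ e ^ p := Real.rpow_le_rpow hm h hp.le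
    have h2 : 0 ≤ e ^ p := Real.rpow_nonneg he.le p
    nlinarith [Real.rpow_nonneg hm p]
  · have h1 : e ^ (1 - p) ≤ m ^ (1 - p) := Real.rpow_le_rpow he.le h (by linarith)
    have h2 : e ^ p * e ^ (1 - p) = e := by
      rw [← Real.rpow_add' he.le (by norm_num), add_sub_cancel, Real.rpow_one]
    have h3 : m ^ p * m ^ (1 - p) = m := by
      rw [← Real.rpow_add' hm (by norm_num), add_sub_cancel, Real.rpow_one]
    have h4 : 0 ≤ m ^ p := Real.rpow_nonneg hm p
    have h5 : 0 ≤ e ^ p := Real.rpow_nonneg he.le p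
    calc m ^ p * e = m ^ p * (e ^ p * e ^ (1-p)) := by rw [h2]
      _ = e ^ p * (m ^ p * e ^ (1-p)) := by ring
      _ ≤ e ^ p * (m ^ p * m ^ (1-p)) :=
          mul_le_mul_of_nonneg_left (mul_le_mul_of_nonneg_left h1 h4) h5
      _ = e ^ p * m := by rw [h3]
      _ ≤ e ^ p * (m + e) := by nlinarith

lemma gpd_cont_rpow {p : ℝ} (hp : 0 ≤ p) : Continuous fun s : ℝ => s ^ p :=
  continuous_iff_continuousAt.mpr fun x => Real.continuousAt_rpow_const x p (Or.inr hp)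

lemma gpd_tendsto {p : ℝ} (hp : 0 < p) :
    Tendsto (fun n : ℕ => ((n:ℝ)+1)⁻¹ ^ p) atTop (nhds 0) := by
  have h1 : Tendsto (fun n : ℕ => ((n:ℝ)+1)⁻¹) atTop (nhds 0) := by
    simpa [one_div] using tendsto_one_div_add_atTop_nhds_zero_nat (𝕜 := ℝ)
  have h2 := ((gpd_cont_rpow hp.le).tendsto 0).comp h1
  simpa [Function.comp_def, Real.zero_rpow hp.ne'] using h2

lemma gpd_norm_mul (T C : H →L[ℂ] H) : ‖T * C‖ = ‖CFC.sqrt (star T * T) * C‖ := by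
  set S := CFC.sqrt (star T * T) with hS
  have hSnn : 0 ≤ S := CFC.sqrt_nonneg _
  have hSsa : star S = S := (IsSelfAdjoint.of_nonneg hSnn)
  have hSS : S * S = star T * T := CFC.sqrt_mul_sqrt_self _ (star_mul_self_nonneg T)
  have h1 : star (T * C) * (T * C) = star (S * C) * (S * C) := by
    rw [star_mul, star_mul, hSsa]
    calc star C * star T * (T * C) = star C * (star T * T) * C := by noncomm_ring
    _ = star C * (S * S) * C := by rw [hSS]
    _ = star C * S * (S * C) := by noncomm_ring
  have h2 : ‖T * C‖ * ‖T * C‖ = ‖S * C‖ * ‖S * C‖ := by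
    rw [← CStarRing.norm_star_mul_self, ← CStarRing.norm_star_mul_self, h1]
  exact (mul_self_inj (norm_nonneg _) (norm_nonneg _)).mp h2

lemma gpd_sqrt_eq (a : H →L[ℂ] H) (ha : 0 ≤ a) :
    CFC.sqrt a = cfc (fun s : ℝ => Real.sqrt s) a := by
  rw [CFC.sqrt_eq_cfc, cfc_nnreal_eq_real _ _ ha]
  congr 1
  funext s; rw [Real.sqrt]

lemma gpd_bound (T : H →L[ℂ] H) {f : ℝ → ℝ} (hf : Continuous f) {c : ℝ} (hc : 0 ≤ c)
    (h : ∀ s ∈ spectrum ℝ (star T * T), |Real.sqrt s * f s| ≤ c) :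
    ‖T * cfc f (star T * T)‖ ≤ c := by
  have ha : 0 ≤ star T * T := star_mul_self_nonneg T
  have ha' : IsSelfAdjoint (star T * T) := .of_nonneg ha
  rw [gpd_norm_mul, gpd_sqrt_eq _ ha,
    ← cfc_mul _ f _ Real.continuous_sqrt.continuousOn hf.continuousOn]
  exact norm_cfc_le hc fun x hx => by
    simpa [Real.norm_eq_abs, abs_mul] using h x hx

lemma gpd_pow (T : H →L[ℂ] H) (n : ℕ) :
    T * (star T * T) ^ n = (T * star T) ^ n * T := by
  induction n with
  | zero => simp
  | succ n ih =>
    calc T * (star T * T) ^ (n+1) = (T * (star T * T) ^ n) * (star T * T) := by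
          rw [pow_succ]; noncomm_ring
    _ = (T * star T) ^ n * (T * star T) * T := by rw [ih]; noncomm_ring
    _ = (T * star T) ^ (n+1) * T := by rw [pow_succ]

lemma gpd_aeval (T : H →L[ℂ] H) (p : Polynomial ℝ) :
    T * Polynomial.aeval (star T * T) p = Polynomial.aeval (T * star T) p * T := by
  induction p using Polynomial.induction_on' with
  | add f g hf hg => simp [mul_add, add_mul, hf, hg]
  | monomial n c =>
    simp only [Polynomial.aeval_monomial]
    calc T * (algebraMap ℝ _ c * (star T * T) ^ n)
        = algebraMap ℝ _ c * (T * (star T * T) ^ n) := by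
          rw [← mul_assoc, ← Algebra.commutes c T, mul_assoc]
    _ = algebraMap ℝ _ c * ((T * star T) ^ n * T) := by rw [gpd_pow]
    _ = algebraMap ℝ _ c * (T * star T) ^ n * T := by rw [mul_assoc]

lemma gpd_intertwine (T : H →L[ℂ] H) {f : ℝ → ℝ} (hf : Continuous f) :
    T * cfc f (star T * T) = cfc f (T * star T) * T := by
  set a := star T * T with ha_def
  set b := T * star T with hb_def
  have ha : 0 ≤ a := star_mul_self_nonneg T
  have hb : 0 ≤ b := mul_star_self_nonneg T
  have ha' : IsSelfAdjoint a := .of_nonneg ha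
  have hb' : IsSelfAdjoint b := .of_nonneg hb
  set M := max (‖a‖ * ‖(1 : H →L[ℂ] H)‖) (‖b‖ * ‖(1 : H →L[ℂ] H)‖) with hM_def
  have hσa : spectrum ℝ a ⊆ Set.Icc 0 M := fun x hx =>
    ⟨spectrum_nonneg_of_nonneg ha hx,
      le_trans (le_trans (le_abs_self x) (spectrum.norm_le_norm_mul_of_mem hx)) (le_max_left _ _)⟩
  have hσb : spectrum ℝ b ⊆ Set.Icc 0 M := fun x hx =>
    ⟨spectrum_nonneg_of_nonneg hb hx,
      le_trans (le_trans (le_abs_self x) (spectrum.norm_le_norm_mul_of_mem hx)) (le_max_right _ _)⟩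
  have key : ∀ ε > (0:ℝ), ‖T * cfc f a - cfc f b * T‖ ≤ 2 * ‖T‖ * ε := by
    intro ε hε
    set fc : C(Set.Icc (0:ℝ) M, ℝ) := ⟨fun x => f x, hf.comp continuous_subtype_val⟩ with hfc
    have hmem : fc ∈ closure ((polynomialFunctions (Set.Icc (0:ℝ) M)) :
        Set C(Set.Icc (0:ℝ) M, ℝ)) := by
      rw [← Subalgebra.topologicalClosure_coe, SetLike.mem_coe,
        polynomialFunctions.topologicalClosure]
      trivial
    obtain ⟨g, hgmem, hgdist⟩ := Metric.mem_closure_iff.mp hmem ε hε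
    obtain ⟨p, hp⟩ : ∃ p : Polynomial ℝ, p.toContinuousMapOn _ = g := by
      rw [polynomialFunctions] at hgmem
      obtain ⟨p, -, hp⟩ := hgmem
      exact ⟨p, hp⟩
    have hfg : ∀ x ∈ Set.Icc (0:ℝ) M, |f x - p.eval x| ≤ ε := by
      intro x hx
      have h1 : dist (fc ⟨x, hx⟩) (g ⟨x, hx⟩) ≤ dist fc g := ContinuousMap.dist_apply_le_dist _
      have hgx : g ⟨x, hx⟩ = p.eval x := by rw [← hp]; rfl
      have : dist (f x) (p.eval x) ≤ dist fc g := by rw [← hgx]; simpa [hfc] using h1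
      rw [Real.dist_eq] at this
      exact this.trans hgdist.le
    have h1 : ‖cfc f a - cfc p.eval a‖ ≤ ε := by
      rw [← cfc_sub f p.eval a hf.continuousOn (Polynomial.continuous p).continuousOn]
      exact norm_cfc_le hε.le fun x hx => by
        simpa [Real.norm_eq_abs] using hfg x (hσa hx)
    have h2 : ‖cfc p.eval b - cfc f b‖ ≤ ε := by
      rw [← cfc_sub p.eval f b (Polynomial.continuous p).continuousOn hf.continuousOn]
      exact norm_cfc_le hε.le fun x hx => by
        rw [Real.norm_eq_abs, abs_sub_comm]
        exact hfg x (hσb hx)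
    have h3 : T * cfc p.eval a = cfc p.eval b * T := by
      rw [cfc_polynomial p a, cfc_polynomial p b]
      exact gpd_aeval T p
    have hsplit : T * cfc f a - cfc f b * T
        = T * (cfc f a - cfc p.eval a) + (cfc p.eval b - cfc f b) * T := by
      rw [mul_sub, sub_mul, h3]; abel
    calc ‖T * cfc f a - cfc f b * T‖
        ≤ ‖T * (cfc f a - cfc p.eval a)‖ + ‖(cfc p.eval b - cfc f b) * T‖ := by
          rw [hsplit]; exact norm_add_le _ _
      _ ≤ ‖T‖ * ε + ε * ‖T‖ := by
          gcongr
          · exact (norm_mul_le _ _).trans (by gcongr)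
          · exact (norm_mul_le _ _).trans (by gcongr)
      _ = 2 * ‖T‖ * ε := by ring
  have hle : ‖T * cfc f a - cfc f b * T‖ ≤ 0 := by
    apply le_of_forall_pos_le_add
    intro ε hε
    rw [zero_add]
    rcases le_or_gt (2 * ‖T‖) 0 with h | h
    · exact le_trans (key ε hε) (by nlinarith)
    · refine le_trans (key (ε / (2 * ‖T‖)) (by positivity)) ?_
      rw [mul_div_cancel₀ _ (by positivity : (2:ℝ) * ‖T‖ ≠ 0)]
  have := le_antisymm hle (norm_nonneg _)
  rwa [norm_eq_zero, sub_eq_zero] at this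

/-- The function used to express `CFC.rpow (CFC.sqrt a) y` as a real cfc. -/
noncomputable def gpdg (y : ℝ) : ℝ → ℝ := fun s => (max s 0) ^ (y/2)

lemma gpdg_cont {y : ℝ} (hy : 0 ≤ y) : Continuous (gpdg y) :=
  (gpd_cont_rpow (by positivity)).comp (continuous_id.max continuous_const)

lemma gpd_rpow_sqrt (a : H →L[ℂ] H) (ha : 0 ≤ a) {y : ℝ} (hy : 0 < y) :
    CFC.rpow (CFC.sqrt a) y = cfc (gpdg y) a := by
  have h1 : CFC.rpow (CFC.sqrt a) y = CFC.rpow a (y/2) := by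
    have := CFC.rpow_sqrt_nnreal (a := a) (x := y.toNNReal) ha
    rwa [Real.coe_toNNReal _ hy.le] at this
  rw [h1, show CFC.rpow a (y/2) = cfc (fun x : ℝ≥0 => x ^ (y/2)) a from rfl,
    cfc_nnreal_eq_real _ _ ha]
  apply cfc_congr
  intro x hx
  simp [gpdg, NNReal.coe_rpow, Real.coe_toNNReal']

end gpdAux

variable {H K : Type*} [NormedAddCommGroup H] [InnerProductSpace ℂ H] [CompleteSpace H]
  [NormedAddCommGroup K] [InnerProductSpace ℂ K] [CompleteSpace K]
theorem generalized_polar_decomposition (T : H →L[ℂ] H) :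
    ∀ α ∈ Set.Ioo (0 : ℝ) 1, ∃ V : H →L[ℂ] H,
      T = V ∘L CFC.rpow (CFC.sqrt (adjoint T ∘L T)) α ∧
      adjoint T = adjoint V ∘L CFC.rpow (CFC.sqrt (T ∘L adjoint T)) α ∧
      adjoint V ∘L V = CFC.rpow (CFC.sqrt (adjoint T ∘L T)) (2 * (1 - α)) ∧
      V ∘L adjoint V = CFC.rpow (CFC.sqrt (T ∘L adjoint T)) (2 * (1 - α)) ∧
      ∀ β : ℝ, 0 < β →
        V ∘L CFC.rpow (CFC.sqrt (adjoint T ∘L T)) β =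
          CFC.rpow (CFC.sqrt (T ∘L adjoint T)) β ∘L V := by
  show ∀ α ∈ Set.Ioo (0:ℝ) 1, ∃ V : H →L[ℂ] H,
      T = V * CFC.rpow (CFC.sqrt (star T * T)) α ∧
      star T = star V * CFC.rpow (CFC.sqrt (T * star T)) α ∧
      star V * V = CFC.rpow (CFC.sqrt (star T * T)) (2 * (1 - α)) ∧
      V * star V = CFC.rpow (CFC.sqrt (T * star T)) (2 * (1 - α)) ∧
      ∀ β : ℝ, 0 < β →
        V * CFC.rpow (CFC.sqrt (star T * T)) β = CFC.rpow (CFC.sqrt (T * star T)) β * V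

  intro α hα
  obtain ⟨hα0, hα1⟩ := hα
  set a := star T * T with ha_def
  set b := T * star T with hb_def
  have ha : 0 ≤ a := star_mul_self_nonneg T
  have hb : 0 ≤ b := mul_star_self_nonneg T
  have ha' : IsSelfAdjoint a := .of_nonneg ha
  have hb' : IsSelfAdjoint b := .of_nonneg hb
  have hσa : ∀ s ∈ spectrum ℝ a, (0:ℝ) ≤ s := fun s hs => spectrum_nonneg_of_nonneg ha hs
  have hσb : ∀ s ∈ spectrum ℝ b, (0:ℝ) ≤ s := fun s hs => spectrum_nonneg_of_nonneg hb hs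
  have h1α : (0:ℝ) < 1 - α := by linarith
  set p1 : ℝ := (1 - α)/2 with hp1_def
  have hp1 : 0 < p1 := by rw [hp1_def]; linarith
  have hp11 : p1 ≤ 1 := by rw [hp1_def]; linarith
  set e : ℕ → ℝ := fun n => ((n:ℝ)+1)⁻¹ with he_def
  have he : ∀ n, 0 < e n := fun n => by rw [he_def]; positivity
  set u : ℕ → ℝ → ℝ :=
    fun n s => (max s 0) ^ p1 * (Real.sqrt (max s 0) / (max s 0 + e n)) with hu_def
  have cmax : Continuous fun s : ℝ => max s 0 := continuous_id.max continuous_const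
  have hden : ∀ n (s:ℝ), max s 0 + e n ≠ 0 := fun n s => by
    have h0 : (0:ℝ) ≤ max s 0 := le_max_right s 0
    have := he n
    exact ne_of_gt (by linarith)
  have hu : ∀ n, Continuous (u n) := fun n => by
    rw [hu_def]
    exact ((gpd_cont_rpow hp1.le).comp cmax).mul
      ((Real.continuous_sqrt.comp cmax).div (cmax.add continuous_const) (hden n))
  set Vf : ℕ → (H →L[ℂ] H) := fun n => T * cfc (u n) a with hVf_def
  have hsaun : ∀ n, star (cfc (u n) a) = cfc (u n) a := fun n => (cfc_predicate (u n) a).star_eq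
  -- pointwise facts
  have hpt1 : ∀ n (s:ℝ), 0 ≤ s → Real.sqrt s * u n s = s ^ p1 * (s/(s+e n)) := by
    intro n s hs
    have hmax : max s 0 = s := max_eq_left hs
    rw [hu_def]
    simp only [hmax]
    rw [show Real.sqrt s * (s ^ p1 * (Real.sqrt s / (s + e n)))
      = s ^ p1 * ((Real.sqrt s * Real.sqrt s) / (s + e n)) from by ring, Real.mul_self_sqrt hs]
  have hpt2 : ∀ n (s:ℝ), 0 ≤ s → |s/(s+e n) - 1| = e n/(s+e n) := by
    intro n s hs
    have hse : 0 < s + e n := by have := he n; linarith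
    rw [show s/(s+e n) - 1 = -(e n/(s+e n)) from by field_simp; ring, abs_neg,
      abs_of_pos (div_pos (he n) hse)]
  have hptE : ∀ n (s:ℝ), 0 ≤ s → ∀ p : ℝ, 0 < p → p ≤ 1 →
      s ^ p * |s/(s+e n) - 1| ≤ e n ^ p := by
    intro n s hs p hp hq
    rw [hpt2 n s hs]
    exact gpd_E hs (he n) hp hq
  -- Cauchy sequence
  have hmono : ∀ k l : ℕ, k ≤ l → e l ≤ e k := by
    intro k l h
    rw [he_def]
    apply inv_anti₀ (by positivity)
    have : (k:ℝ) ≤ (l:ℝ) := by exact_mod_cast h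
    linarith
  have hcau : CauchySeq Vf := by
    apply cauchySeq_of_le_tendsto_0 (fun N => 2 * e N ^ p1) ?_ ?_
    · intro n m N hn hm
      rw [dist_eq_norm]
      have hsub : Vf n - Vf m = T * cfc (fun s => u n s - u m s) a := by
        rw [hVf_def]
        simp only
        rw [← mul_sub, ← cfc_sub _ _ a (hu n).continuousOn (hu m).continuousOn]
      rw [hsub]
      have hb1 : ‖T * cfc (fun s => u n s - u m s) a‖ ≤ e n ^ p1 + e m ^ p1 := by
        apply gpd_bound T ((hu n).sub (hu m)) (by positivity)
        intro s hsp
        have hs := hσa s hsp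
        rw [Pi.sub_apply]
        rw [show Real.sqrt s * (u n s - u m s)
          = Real.sqrt s * u n s - Real.sqrt s * u m s from by ring, hpt1 n s hs, hpt1 m s hs,
          show s ^ p1 * (s/(s+e n)) - s ^ p1 * (s/(s+e m))
            = s ^ p1 * (s/(s+e n) - 1) - s ^ p1 * (s/(s+e m) - 1) from by ring]
        have e1 : |s ^ p1 * (s/(s+e n) - 1)| ≤ e n ^ p1 := by
          rw [abs_mul, abs_of_nonneg (Real.rpow_nonneg hs p1)]
          exact hptE n s hs p1 hp1 hp11
        have e2 : |s ^ p1 * (s/(s+e m) - 1)| ≤ e m ^ p1 := by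
          rw [abs_mul, abs_of_nonneg (Real.rpow_nonneg hs p1)]
          exact hptE m s hs p1 hp1 hp11
        calc |s ^ p1 * (s/(s+e n) - 1) - s ^ p1 * (s/(s+e m) - 1)|
            ≤ |s ^ p1 * (s/(s+e n) - 1)| + |s ^ p1 * (s/(s+e m) - 1)| := abs_sub _ _
          _ ≤ e n ^ p1 + e m ^ p1 := add_le_add e1 e2
      refine hb1.trans ?_
      have b1 : e n ^ p1 ≤ e N ^ p1 := Real.rpow_le_rpow (he n).le (hmono N n hn) hp1.le
      have b2 : e m ^ p1 ≤ e N ^ p1 := Real.rpow_le_rpow (he m).le (hmono N m hm) hp1.le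
      show e n ^ p1 + e m ^ p1 ≤ 2 * e N ^ p1
      linarith
    · have := (gpd_tendsto hp1).const_mul (2:ℝ)
      simpa [he_def] using this
  obtain ⟨V, hV⟩ := cauchySeq_tendsto_of_complete hcau
  -- core convergence T * cfc (τ n) a → T
  have hτc : ∀ n, Continuous fun s : ℝ => max s 0/(max s 0 + e n) := fun n =>
    cmax.div (cmax.add continuous_const) (hden n)
  have hB : Tendsto (fun n => T * cfc (fun s : ℝ => max s 0/(max s 0 + e n)) a)
      atTop (nhds T) := by
    rw [tendsto_iff_norm_sub_tendsto_zero]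
    apply squeeze_zero (fun n => norm_nonneg _) (g := fun n => e n ^ ((1:ℝ)/2)) ?_ ?_
    · intro n
      have hsub : T * cfc (fun s : ℝ => max s 0/(max s 0 + e n)) a - T
          = T * cfc (fun s : ℝ => max s 0/(max s 0 + e n) - 1) a := by
        rw [cfc_sub _ _ a (hτc n).continuousOn continuousOn_const, cfc_const_one ℝ a, mul_sub, mul_one]
      rw [hsub]
      apply gpd_bound T ((hτc n).sub continuous_const) (by positivity)
      intro s hsp
      have hs := hσa s hsp
      have hmax : max s 0 = s := max_eq_left hs
      simp only [Pi.sub_apply]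
      rw [hmax, abs_mul, abs_of_nonneg (Real.sqrt_nonneg s), Real.sqrt_eq_rpow]
      exact hptE n s hs (1/2) (by norm_num) (by norm_num)
    · exact gpd_tendsto (by norm_num)
  -- identities for the α-power
  have hgαc : Continuous (gpdg α) := gpdg_cont hα0.le
  have h1n : ∀ n, Vf n * cfc (gpdg α) a
      = T * cfc (fun s : ℝ => max s 0/(max s 0 + e n)) a := by
    intro n
    rw [hVf_def]
    simp only
    rw [mul_assoc, ← cfc_mul _ _ a (hu n).continuousOn hgαc.continuousOn]
    congr 1
    apply cfc_congr
    intro s hsp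
    have hs := hσa s hsp
    have hmax : max s 0 = s := max_eq_left hs
    rw [hu_def]
    simp only [gpdg, hmax]
    have hsum : p1 + α/2 = 1/2 := by rw [hp1_def]; ring
    have h2 : s ^ p1 * s ^ (α/2) = s ^ ((1:ℝ)/2) := by
      rw [← Real.rpow_add' hs (by rw [hsum]; norm_num), hsum]
    calc s ^ p1 * (Real.sqrt s/(s+e n)) * s ^ (α/2)
        = (s ^ p1 * s ^ (α/2)) * (Real.sqrt s/(s+e n)) := by ring
      _ = s ^ ((1:ℝ)/2) * (Real.sqrt s/(s+e n)) := by rw [h2]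
      _ = (Real.sqrt s * Real.sqrt s)/(s+e n) := by rw [← Real.sqrt_eq_rpow]; ring
      _ = s/(s+e n) := by rw [Real.mul_self_sqrt hs]
  have hVPT : Tendsto (fun n => Vf n * cfc (gpdg α) a) atTop (nhds T) := by
    simp only [h1n]; exact hB
  have hTVP : T = V * cfc (gpdg α) a :=
    tendsto_nhds_unique hVPT (hV.mul tendsto_const_nhds)
  have hint : ∀ {f : ℝ → ℝ}, Continuous f → T * cfc f a = cfc f b * T :=
    fun hf => gpd_intertwine T hf
  have h2n : ∀ n, cfc (gpdg α) b * Vf n = Vf n * cfc (gpdg α) a := by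
    intro n
    rw [hVf_def]
    simp only
    calc cfc (gpdg α) b * (T * cfc (u n) a) = (cfc (gpdg α) b * T) * cfc (u n) a := by
          rw [mul_assoc]
      _ = (T * cfc (gpdg α) a) * cfc (u n) a := by rw [← hint hgαc]
      _ = T * (cfc (gpdg α) a * cfc (u n) a) := by rw [mul_assoc]
      _ = T * (cfc (u n) a * cfc (gpdg α) a) := by
          rw [← cfc_mul _ _ a hgαc.continuousOn (hu n).continuousOn,
            ← cfc_mul _ _ a (hu n).continuousOn hgαc.continuousOn]
          exact congrArg (T * ·) (cfc_congr fun s _ => mul_comm _ _)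
      _ = (T * cfc (u n) a) * cfc (gpdg α) a := by rw [mul_assoc]
  have hQVT : cfc (gpdg α) b * V = T :=
    tendsto_nhds_unique (tendsto_const_nhds.mul hV) (by simp only [h2n]; exact hVPT)
  -- the key pointwise bound for goals 3 and 4
  have hptK3 : ∀ n (s:ℝ), 0 ≤ s →
      |u n s * (s * u n s) - gpdg (2*(1-α)) s| ≤ 2 * e n ^ (1-α) := by
    intro n s hs
    have hse : 0 < s + e n := by have := he n; linarith
    have hmax : max s 0 = s := max_eq_left hs
    set t := s/(s+e n) with ht_def
    have ht0 : 0 ≤ t := div_nonneg hs hse.le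
    have ht1 : t ≤ 1 := by rw [ht_def]; exact (div_le_one hse).mpr (by linarith [he n])
    have h1t : 1 - t = e n/(s+e n) := by rw [ht_def]; field_simp; ring
    have hsum2 : p1 + p1 = 1-α := by rw [hp1_def]; ring
    have h1' : s ^ p1 * s ^ p1 = s ^ (1-α) := by
      rw [← Real.rpow_add' hs (by rw [hsum2]; linarith), hsum2]
    have h2' : Real.sqrt s * Real.sqrt s = s := Real.mul_self_sqrt hs
    have hcube : u n s * (s * u n s) = s ^ (1-α) * (t*t) := by
      rw [hu_def]
      simp only [hmax]
      calc s ^ p1 * (Real.sqrt s / (s + e n)) * (s * (s ^ p1 * (Real.sqrt s / (s + e n))))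
          = (s ^ p1 * s ^ p1) * ((Real.sqrt s * Real.sqrt s) * s)
            * ((1/(s + e n)) * (1/(s + e n))) := by ring
        _ = s ^ (1-α) * (s * s) * ((1/(s + e n)) * (1/(s + e n))) := by rw [h1', h2']
        _ = s ^ (1-α) * (t * t) := by rw [ht_def]; ring
    have hg : gpdg (2*(1-α)) s = s ^ (1-α) := by
      simp only [gpdg, hmax]
      norm_num
    rw [hcube, hg]
    have habs : |s ^ (1-α) * (t*t) - s ^ (1-α)| = s ^ (1-α) * ((1-t)*(1+t)) := by
      rw [show s ^ (1-α) * (t*t) - s ^ (1-α) = -(s ^ (1-α) * ((1-t)*(1+t))) from by ring,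
        abs_neg, abs_of_nonneg]
      exact mul_nonneg (Real.rpow_nonneg hs _)
        (mul_nonneg (by linarith) (by linarith))
    rw [habs]
    have hstep : s ^ (1-α) * ((1-t)*(1+t)) ≤ 2 * (s ^ (1-α) * (e n/(s+e n))) := by
      rw [← h1t]
      have hnn : 0 ≤ s ^ (1-α) := Real.rpow_nonneg hs _
      nlinarith [mul_nonneg hnn (by linarith : (0:ℝ) ≤ 1 - t)]
    refine hstep.trans ?_
    have := gpd_E hs (he n) h1α (by linarith)
    linarith
  -- assemble
  refine ⟨V, ?_, ?_, ?_, ?_, ?_⟩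
  · rw [gpd_rpow_sqrt a ha hα0]
    exact hTVP
  · rw [gpd_rpow_sqrt b hb hα0, ← hQVT, star_mul, (cfc_predicate (gpdg α) b).star_eq]
  · -- star V * V
    rw [gpd_rpow_sqrt a ha (by linarith : (0:ℝ) < 2*(1-α))]
    have h3n : ∀ n, star (Vf n) * Vf n = cfc (fun s : ℝ => u n s * (s * u n s)) a := by
      intro n
      have hexp : cfc (fun s : ℝ => u n s * (s * u n s)) a
          = cfc (u n) a * (a * cfc (u n) a) := by
        rw [cfc_mul _ _ a (hu n).continuousOn (show Continuous (fun s : ℝ => s * u n s) from continuous_id'.mul (hu n)).continuousOn,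
          cfc_mul _ _ a continuous_id'.continuousOn (hu n).continuousOn, cfc_id' ℝ a]
      rw [hexp, hVf_def]
      simp only
      rw [star_mul, hsaun n, ha_def]
      noncomm_ring
    have h3lim2 : Tendsto (fun n => star (Vf n) * Vf n) atTop
        (nhds (cfc (gpdg (2*(1-α))) a)) := by
      simp only [h3n]
      rw [tendsto_iff_norm_sub_tendsto_zero]
      apply squeeze_zero (fun n => norm_nonneg _) (g := fun n => 2 * e n ^ (1-α)) ?_ ?_
      · intro n
        rw [← cfc_sub _ _ a (show Continuous (fun s : ℝ => u n s * (s * u n s)) from (hu n).mul (continuous_id'.mul (hu n))).continuousOn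
          (gpdg_cont (by linarith)).continuousOn]
        apply norm_cfc_le (by positivity)
        intro s hsp
        rw [Real.norm_eq_abs]
        exact hptK3 n s (hσa s hsp)
      · have := (gpd_tendsto h1α).const_mul (2:ℝ)
        simpa [he_def] using this
    exact tendsto_nhds_unique (hV.star.mul hV) h3lim2
  · -- V * star V
    rw [gpd_rpow_sqrt b hb (by linarith : (0:ℝ) < 2*(1-α))]
    have h4n : ∀ n, Vf n * star (Vf n) = cfc (fun s : ℝ => u n s * (s * u n s)) b := by
      intro n
      have husq : Continuous fun s : ℝ => u n s * u n s := (hu n).mul (hu n)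
      have hexp : cfc (fun s : ℝ => u n s * (s * u n s)) b
          = cfc (fun s : ℝ => u n s * u n s) b * b := by
        rw [show (fun s : ℝ => u n s * (s * u n s)) = fun s : ℝ => (u n s * u n s) * s from
          by funext s; ring]
        rw [cfc_mul _ _ b husq.continuousOn continuous_id'.continuousOn, cfc_id' ℝ b]
      have hmid : T * (cfc (u n) a * cfc (u n) a) = cfc (fun s => u n s * u n s) b * T := by
        rw [← cfc_mul _ _ a (hu n).continuousOn (hu n).continuousOn]
        exact hint husq
      rw [hexp, hVf_def]
      simp only
      rw [star_mul, hsaun n]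
      calc T * cfc (u n) a * (cfc (u n) a * star T)
          = T * (cfc (u n) a * cfc (u n) a) * star T := by noncomm_ring
        _ = cfc (fun s => u n s * u n s) b * T * star T := by rw [hmid]
        _ = cfc (fun s : ℝ => u n s * u n s) b * b := by rw [hb_def]; noncomm_ring
    have h4lim2 : Tendsto (fun n => Vf n * star (Vf n)) atTop
        (nhds (cfc (gpdg (2*(1-α))) b)) := by
      simp only [h4n]
      rw [tendsto_iff_norm_sub_tendsto_zero]
      apply squeeze_zero (fun n => norm_nonneg _) (g := fun n => 2 * e n ^ (1-α)) ?_ ?_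
      · intro n
        rw [← cfc_sub _ _ b (show Continuous (fun s : ℝ => u n s * (s * u n s)) from (hu n).mul (continuous_id'.mul (hu n))).continuousOn
          (gpdg_cont (by linarith)).continuousOn]
        apply norm_cfc_le (by positivity)
        intro s hsp
        rw [Real.norm_eq_abs]
        exact hptK3 n s (hσb s hsp)
      · have := (gpd_tendsto h1α).const_mul (2:ℝ)
        simpa [he_def] using this
    exact tendsto_nhds_unique (hV.mul hV.star) h4lim2
  · -- commutation with powers
    intro β hβ
    rw [gpd_rpow_sqrt a ha hβ, gpd_rpow_sqrt b hb hβ]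
    have hgβc : Continuous (gpdg β) := gpdg_cont hβ.le
    have h5n : ∀ n, Vf n * cfc (gpdg β) a = cfc (gpdg β) b * Vf n := by
      intro n
      rw [hVf_def]
      simp only
      calc T * cfc (u n) a * cfc (gpdg β) a
          = T * cfc (fun s => u n s * gpdg β s) a := by
            rw [mul_assoc, ← cfc_mul _ _ a (hu n).continuousOn hgβc.continuousOn]
        _ = T * cfc (fun s => gpdg β s * u n s) a := by
            exact congrArg (T * ·) (cfc_congr fun s _ => mul_comm _ _)
        _ = T * (cfc (gpdg β) a * cfc (u n) a) := by
            rw [← cfc_mul _ _ a hgβc.continuousOn (hu n).continuousOn]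
        _ = (T * cfc (gpdg β) a) * cfc (u n) a := by rw [mul_assoc]
        _ = (cfc (gpdg β) b * T) * cfc (u n) a := by rw [hint hgβc]
        _ = cfc (gpdg β) b * (T * cfc (u n) a) := by rw [mul_assoc]
    exact tendsto_nhds_unique (hV.mul tendsto_const_nhds)
      (by simp only [h5n]; exact tendsto_const_nhds.mul hV)
end

section
/- Let T be a bounded operator on a complex Hilbert space H. Then w((|T| - |T*|)/2 + i·Re T) ≤ (1/2)‖|T| + |T*|‖, where Re T = (T + T*)/2, |T| = (T*T)^{1/2}, |T*| = (TT*)^{1/2}, and w denotes the numerical radius. -/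
set_option maxHeartbeats 1000000
set_option synthInstance.maxHeartbeats 200000

open scoped ComplexOrder
open ContinuousLinearMap (adjoint)

variable {H K : Type*} [NormedAddCommGroup H] [InnerProductSpace ℂ H] [CompleteSpace H]
  [NormedAddCommGroup K] [InnerProductSpace ℂ K] [CompleteSpace K]

/-- The numerical radius of a bounded operator. -/
noncomputable def numRad {E : Type*} [NormedAddCommGroup E] [InnerProductSpace ℂ E]
    (T : E →L[ℂ] E) : ℝ :=
  ⨆ x : {x : E // ‖x‖ = 1}, ‖(inner ℂ (T x.1) x.1 : ℂ)‖


/-!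
Put `a = ⟪|T| x, x⟫` and `b = ⟪|T*| x, x⟫` for a unit vector `x`. Since `(|T| - |T*|)/2` and
`Re T` are self-adjoint, `⟪((|T| - |T*|)/2 + i Re T) x, x⟫` has modulus squared
`((a - b)/2)² + (Re ⟪T x, x⟫)²`. The mixed Schwarz inequality `|⟪T x, y⟫|² ≤ ⟪|T| x, x⟫ ⟪|T*| y, y⟫`
bounds `(Re ⟪T x, x⟫)²` by `a b`, so the modulus is at most `(a + b)/2 ≤ ‖|T| + |T*|‖ / 2`.

The mixed Schwarz inequality is proved without polar decomposition. For `ε > 0` let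
`X = (|T| + ε)⁻¹`; Cauchy–Schwarz for the positive form `⟪X ·, ·⟫` applied to `(|T| + ε) x` and
`T* y` gives `|⟪T x, y⟫|² ≤ ⟪(|T| + ε) x, x⟫ ⟪T X T* y, y⟫`. Finally `T X T* ≤ |T*|`, since
`(T X T*)² = T (X |T|² X) T* ≤ T T* = |T*|²` and the square root is operator monotone; let `ε → 0`.
-/

open RCLike Filter Topology

section CStarAlgebra

variable {A : Type*} [CStarAlgebra A] [PartialOrder A] [StarOrderedRing A]

lemma CFC.le_of_mul_self_le_mul_self {a b : A} (ha : 0 ≤ a) (hb : 0 ≤ b) (h : a * a ≤ b * b) :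
    a ≤ b := by
  simpa only [sqrt_mul_self a ha, sqrt_mul_self b hb] using sqrt_le_sqrt _ _ h

variable {a : A} {ε : ℝ}

lemma continuousOn_inv_add_const_spectrum (ha : 0 ≤ a) (hε : 0 < ε) :
    ContinuousOn (fun t : ℝ => (t + ε)⁻¹) (spectrum ℝ a) :=
  ContinuousOn.inv₀ (by fun_prop) fun t ht => by
    have := spectrum_nonneg_of_nonneg ha ht; positivity

lemma cfc_inv_add_const_nonneg (ha : 0 ≤ a) (hε : 0 < ε) :
    0 ≤ cfc (fun t : ℝ => (t + ε)⁻¹) a :=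
  cfc_nonneg fun t ht => by have := spectrum_nonneg_of_nonneg ha ht; positivity

lemma cfc_inv_add_const_mul_add_algebraMap (ha : 0 ≤ a) (hε : 0 < ε) :
    cfc (fun t : ℝ => (t + ε)⁻¹) a * (a + algebraMap ℝ A ε) = 1 := by
  rw [show a + algebraMap ℝ A ε = cfc (fun t : ℝ => t + ε) a by
      rw [cfc_add_const ε (fun t : ℝ => t) a, cfc_id' ℝ a],
    ← cfc_mul _ _ a (continuousOn_inv_add_const_spectrum ha hε)]
  refine (cfc_congr fun t ht => ?_).trans (cfc_const_one ℝ a)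
  have := spectrum_nonneg_of_nonneg ha ht
  exact inv_mul_cancel₀ (by positivity)

lemma cfc_inv_add_const_mul_mul_self_mul_le_one (ha : 0 ≤ a) (hε : 0 < ε) :
    cfc (fun t : ℝ => (t + ε)⁻¹) a * (a * a) * cfc (fun t : ℝ => (t + ε)⁻¹) a ≤ 1 := by
  have hcont := continuousOn_inv_add_const_spectrum ha hε
  rw [show a * a = cfc (fun t : ℝ => t * t) a by
      rw [cfc_mul (fun t : ℝ => t) (fun t : ℝ => t) a, cfc_id' ℝ a],
    ← cfc_mul _ _ a hcont,
    ← cfc_mul (fun t : ℝ => (t + ε)⁻¹ * (t * t)) _ a (hcont.mul (by fun_prop)) hcont]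
  refine cfc_le_one _ a fun t ht => ?_
  have := spectrum_nonneg_of_nonneg ha ht
  rw [mul_comm, ← mul_assoc, ← mul_inv, ← div_eq_inv_mul]
  exact div_le_one_of_le₀ (by nlinarith) (by positivity)

lemma CFC.mul_cfc_inv_add_const_mul_star_le_sqrt (a : A) (hε : 0 < ε) :
    a * cfc (fun t : ℝ => (t + ε)⁻¹) (sqrt (star a * a)) * star a ≤ sqrt (a * star a) := by
  set X := cfc (fun t : ℝ => (t + ε)⁻¹) (sqrt (star a * a))
  have hX : 0 ≤ X := cfc_inv_add_const_nonneg (sqrt_nonneg _) hε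
  refine le_of_mul_self_le_mul_self (star_right_conjugate_nonneg hX a) (sqrt_nonneg _) ?_
  calc a * X * star a * (a * X * star a)
      = a * (X * (sqrt (star a * a) * sqrt (star a * a)) * X) * star a := by
        rw [sqrt_mul_sqrt_self _ (star_mul_self_nonneg a)]; noncomm_ring
    _ ≤ a * 1 * star a := star_right_conjugate_le_conjugate
        (cfc_inv_add_const_mul_mul_self_mul_le_one (sqrt_nonneg _) hε) a
    _ = sqrt (a * star a) * sqrt (a * star a) := by
        rw [mul_one, sqrt_mul_sqrt_self _ (mul_star_self_nonneg a)]

end CStarAlgebra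

namespace ContinuousLinearMap

variable {E : Type*} [NormedAddCommGroup E] [InnerProductSpace ℂ E]

lemma re_inner_apply_self_le_of_le {P Q : E →L[ℂ] E} (h : P ≤ Q) (x : E) :
    re (inner ℂ (P x) x) ≤ re (inner ℂ (Q x) x) := by
  have := ((le_def P Q).mp h).re_inner_nonneg_left x
  rwa [sub_apply, inner_sub_left, map_sub, sub_nonneg] at this

variable [CompleteSpace E]

lemma sq_norm_inner_le_of_nonneg {P : E →L[ℂ] E} (hP : 0 ≤ P) (u v : E) :
    ‖inner ℂ (P u) v‖ ^ 2 ≤ re (inner ℂ (P u) u) * re (inner ℂ (P v) v) := by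
  set Q := CFC.sqrt P
  have hPQ : ∀ w z, inner ℂ (P w) z = inner ℂ (Q w) (Q z) := fun w z => by
    rw [← CFC.sqrt_mul_sqrt_self P hP, mul_apply_eq_comp, ← adjoint_inner_right,
      (CFC.sqrt_nonneg P).isSelfAdjoint.adjoint_eq]
  rw [hPQ, hPQ, hPQ, inner_self_eq_norm_sq, inner_self_eq_norm_sq, ← mul_pow]
  exact pow_le_pow_left₀ (norm_nonneg _) (norm_inner_le_norm _ _) 2

lemma sq_norm_inner_apply_le_add_mul (T : E →L[ℂ] E) (x y : E) {ε : ℝ} (hε : 0 < ε) :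
    ‖inner ℂ (T x) y‖ ^ 2 ≤
      (re (inner ℂ (CFC.sqrt (adjoint T ∘L T) x) x) + ε * ‖x‖ ^ 2) *
        re (inner ℂ (CFC.sqrt (T ∘L adjoint T) y) y) := by
  set A := CFC.sqrt (adjoint T ∘L T)
  set X := cfc (fun t : ℝ => (t + ε)⁻¹) A
  have hX : 0 ≤ X := cfc_inv_add_const_nonneg (CFC.sqrt_nonneg _) hε
  set u := (A + algebraMap ℝ (E →L[ℂ] E) ε) x
  have hXu : X u = x := by
    rw [← mul_apply_eq_comp, cfc_inv_add_const_mul_add_algebraMap (CFC.sqrt_nonneg _) hε,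
      one_apply_eq_self]
  have hu : re (inner ℂ (X u) u) = re (inner ℂ (A x) x) + ε * ‖x‖ ^ 2 := by
    rw [← adjoint_inner_right, hX.isSelfAdjoint.adjoint_eq, hXu,
      show u = A x + algebraMap ℝ (E →L[ℂ] E) ε x from rfl, inner_add_left, map_add,
      Algebra.algebraMap_eq_smul_one, smul_apply, one_apply_eq_self, ← Complex.coe_smul,
      inner_smul_left, inner_self_eq_norm_sq_to_K]
    simp [← Complex.ofReal_pow]
  have hv : re (inner ℂ (X (adjoint T y)) (adjoint T y)) ≤
      re (inner ℂ (CFC.sqrt (T ∘L adjoint T) y) y) := by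
    rw [adjoint_inner_right]
    exact re_inner_apply_self_le_of_le (CFC.mul_cfc_inv_add_const_mul_star_le_sqrt T hε) y
  calc ‖inner ℂ (T x) y‖ ^ 2 = ‖inner ℂ (X u) (adjoint T y)‖ ^ 2 := by
        rw [hXu, adjoint_inner_right]
    _ ≤ re (inner ℂ (X u) u) * re (inner ℂ (X (adjoint T y)) (adjoint T y)) :=
        sq_norm_inner_le_of_nonneg hX _ _
    _ ≤ re (inner ℂ (X u) u) * re (inner ℂ (CFC.sqrt (T ∘L adjoint T) y) y) :=
        mul_le_mul_of_nonneg_left hv (((nonneg_iff_isPositive X).mp hX).re_inner_nonneg_left u)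
    _ = _ := by rw [hu]

theorem sq_norm_inner_apply_le (T : E →L[ℂ] E) (x y : E) :
    ‖inner ℂ (T x) y‖ ^ 2 ≤
      re (inner ℂ (CFC.sqrt (adjoint T ∘L T) x) x) *
        re (inner ℂ (CFC.sqrt (T ∘L adjoint T) y) y) := by
  have hcont : Continuous fun ε : ℝ =>
      (re (inner ℂ (CFC.sqrt (adjoint T ∘L T) x) x) + ε * ‖x‖ ^ 2) *
        re (inner ℂ (CFC.sqrt (T ∘L adjoint T) y) y) := by fun_prop
  refine ge_of_tendsto (x := 𝓝[>] (0 : ℝ)) ?_ (eventually_nhdsWithin_of_forall fun ε hε =>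
    sq_norm_inner_apply_le_add_mul T x y hε)
  simpa using (hcont.tendsto 0).mono_left nhdsWithin_le_nhds

lemma sq_norm_inner_add_I_smul_apply_self {P Q : E →L[ℂ] E} (hP : IsSelfAdjoint P)
    (hQ : IsSelfAdjoint Q) (x : E) :
    ‖inner ℂ ((P + Complex.I • Q) x) x‖ ^ 2 =
      re (inner ℂ (P x) x) ^ 2 + re (inner ℂ (Q x) x) ^ 2 := by
  have hPx : inner ℂ (P x) x = (re (inner ℂ (P x) x) : ℂ) :=
    (hP.isSymmetric.coe_re_inner_apply_self x).symm
  have hQx : inner ℂ (Q x) x = (re (inner ℂ (Q x) x) : ℂ) :=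
    (hQ.isSymmetric.coe_re_inner_apply_self x).symm
  rw [add_apply, smul_apply, inner_add_left, inner_smul_left, hPx, hQx, Complex.sq_norm,
    Complex.normSq_apply]
  simp
  ring

lemma norm_inner_half_sub_add_I_smul_apply_self_le (T : E →L[ℂ] E) (x : E) :
    ‖inner ℂ (((1 / 2 : ℂ) • (CFC.sqrt (adjoint T ∘L T) - CFC.sqrt (T ∘L adjoint T)) +
        Complex.I • ((1 / 2 : ℂ) • (T + adjoint T))) x) x‖ ≤
      1 / 2 * re (inner ℂ ((CFC.sqrt (adjoint T ∘L T) + CFC.sqrt (T ∘L adjoint T)) x) x) := by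
  set A := CFC.sqrt (adjoint T ∘L T)
  set B := CFC.sqrt (T ∘L adjoint T)
  set a := re (inner ℂ (A x) x)
  set b := re (inner ℂ (B x) x)
  have hA : 0 ≤ A := CFC.sqrt_nonneg _
  have hB : 0 ≤ B := CFC.sqrt_nonneg _
  have ha : 0 ≤ a := ((nonneg_iff_isPositive A).mp hA).re_inner_nonneg_left x
  have hb : 0 ≤ b := ((nonneg_iff_isPositive B).mp hB).re_inner_nonneg_left x
  have hP : IsSelfAdjoint ((1 / 2 : ℂ) • (A - B)) := by
    simp [IsSelfAdjoint, star_smul, hA.isSelfAdjoint.star_eq, hB.isSelfAdjoint.star_eq]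
  have hQ : IsSelfAdjoint ((1 / 2 : ℂ) • (T + adjoint T)) := by
    simp [IsSelfAdjoint, star_smul, star_eq_adjoint, add_comm]
  have hP_re : re (inner ℂ (((1 / 2 : ℂ) • (A - B)) x) x) = (a - b) / 2 := by
    simp [a, b]
    ring
  have hQ_re : re (inner ℂ (((1 / 2 : ℂ) • (T + adjoint T)) x) x) = re (inner ℂ (T x) x) := by
    simp [adjoint_inner_left]
    rw [← inner_conj_symm x (T x), Complex.conj_re]
    ring
  have hmixed : re (inner ℂ (T x) x) ^ 2 ≤ a * b :=
    (sq_le_sq.mpr ((abs_re_le_norm (inner ℂ (T x) x)).trans (le_abs_self _))).trans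
      (sq_norm_inner_apply_le T x x)
  have hsum : re (inner ℂ ((A + B) x) x) = a + b := by simp [a, b]
  rw [hsum, ← sq_le_sq₀ (norm_nonneg _) (by linarith), sq_norm_inner_add_I_smul_apply_self hP hQ,
    hP_re, hQ_re]
  nlinarith

end ContinuousLinearMap

theorem numRad_re_bound (T : H →L[ℂ] H) :
    numRad ((1 / 2 : ℂ) • (CFC.sqrt (adjoint T ∘L T) - CFC.sqrt (T ∘L adjoint T)) +
        Complex.I • ((1 / 2 : ℂ) • (T + adjoint T))) ≤
      (1 / 2) * ‖CFC.sqrt (adjoint T ∘L T) + CFC.sqrt (T ∘L adjoint T)‖ := by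
  refine Real.iSup_le (fun ⟨x, hx⟩ => ?_) (by positivity)
  refine (ContinuousLinearMap.norm_inner_half_sub_add_I_smul_apply_self_le T x).trans ?_
  set S := CFC.sqrt (adjoint T ∘L T) + CFC.sqrt (T ∘L adjoint T)
  gcongr
  calc re (inner ℂ (S x) x) ≤ ‖S x‖ * ‖x‖ := re_inner_le_norm _ _
    _ ≤ ‖S‖ := by simpa [hx] using S.le_opNorm x
end

section
/- Let T be a bounded operator on a complex Hilbert space H. Then w((|T| - |T*|)/2 + i·Im T) ≤ (1/2)‖|T| + |T*|‖, where Im T = (T - T*)/(2i). -/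
set_option maxHeartbeats 1000000
set_option synthInstance.maxHeartbeats 200000

open scoped ComplexOrder
open ContinuousLinearMap (adjoint)

variable {H K : Type*} [NormedAddCommGroup H] [InnerProductSpace ℂ H] [CompleteSpace H]
  [NormedAddCommGroup K] [InnerProductSpace ℂ K] [CompleteSpace K]

/-- Selfadjoint operators are dominated by the square root of their square. -/
theorem aux_sa_le_sqrt (m : H →L[ℂ] H) (hm : IsSelfAdjoint m) :
    m ≤ CFC.sqrt (m * m) := by
  have hb : (0 : H →L[ℂ] H) ≤ cfc (fun x : ℝ => |x|) m := cfc_nonneg fun x _ => abs_nonneg x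
  have hbb : cfc (fun x : ℝ => |x|) m * cfc (fun x : ℝ => |x|) m = m * m := by
    rw [← cfc_mul _ _ m (by fun_prop) (by fun_prop)]
    calc cfc (fun x : ℝ => |x| * |x|) m = cfc (fun x : ℝ => x * x) m :=
          cfc_congr fun x _ => abs_mul_abs_self x
      _ = m * m := by rw [cfc_mul _ _ m (by fun_prop) (by fun_prop), cfc_id' ℝ m]
  rw [CFC.sqrt_unique hbb hb]
  conv_lhs => rw [← cfc_id' ℝ m]
  exact cfc_mono (fun x _ => le_abs_self x) (by fun_prop)

/-- The mixed Cauchy–Schwarz type inequality, additive form. -/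
theorem aux_key (T : H →L[ℂ] H) (x y : H) :
    2 * Complex.re (inner ℂ (T x) y : ℂ) ≤
      Complex.re (inner ℂ (CFC.sqrt (adjoint T ∘L T) x) x : ℂ) +
        Complex.re (inner ℂ (CFC.sqrt (T ∘L adjoint T) y) y : ℂ) := by
  set P : H →L[ℂ] H := CFC.sqrt (adjoint T ∘L T) with hPdef
  set Q : H →L[ℂ] H := CFC.sqrt (T ∘L adjoint T) with hQdef
  have hT1 : (0 : H →L[ℂ] H) ≤ adjoint T ∘L T := by
    simpa [ContinuousLinearMap.star_eq_adjoint, ContinuousLinearMap.mul_def] using star_mul_self_nonneg T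
  have hT2 : (0 : H →L[ℂ] H) ≤ T ∘L adjoint T := by
    simpa [ContinuousLinearMap.star_eq_adjoint, ContinuousLinearMap.mul_def] using mul_star_self_nonneg T
  have hP : (0 : H →L[ℂ] H) ≤ P := CFC.sqrt_nonneg _
  have hQ : (0 : H →L[ℂ] H) ≤ Q := CFC.sqrt_nonneg _
  have hPP : P * P = adjoint T ∘L T := CFC.sqrt_mul_sqrt_self _ hT1
  have hQQ : Q * Q = T ∘L adjoint T := CFC.sqrt_mul_sqrt_self _ hT2
  have hPpos : P.IsPositive := (ContinuousLinearMap.nonneg_iff_isPositive P).mp hP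
  have hQpos : Q.IsPositive := (ContinuousLinearMap.nonneg_iff_isPositive Q).mp hQ
  let E := WithLp 2 (H × H)
  let φ : E ≃L[ℂ] H × H := WithLp.prodContinuousLinearEquiv 2 ℂ H H
  let M : E →L[ℂ] E := (φ.symm : (H × H) →L[ℂ] E) ∘L
    (((adjoint T) ∘L (ContinuousLinearMap.snd ℂ H H)).prod
      (T ∘L (ContinuousLinearMap.fst ℂ H H))) ∘L (φ : E →L[ℂ] H × H)
  let D : E →L[ℂ] E := (φ.symm : (H × H) →L[ℂ] E) ∘L
    ((P ∘L (ContinuousLinearMap.fst ℂ H H)).prod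
      (Q ∘L (ContinuousLinearMap.snd ℂ H H))) ∘L (φ : E →L[ℂ] H × H)
  have hMinner : ∀ z w : E, (inner ℂ (M z) w : ℂ) =
      inner ℂ (adjoint T (φ z).2) (φ w).1 + inner ℂ (T (φ z).1) (φ w).2 := fun z w => rfl
  have hDinner : ∀ z w : E, (inner ℂ (D z) w : ℂ) =
      inner ℂ (P (φ z).1) (φ w).1 + inner ℂ (Q (φ z).2) (φ w).2 := fun z w => rfl
  have hMsa : IsSelfAdjoint M := by
    rw [ContinuousLinearMap.isSelfAdjoint_iff_isSymmetric]
    intro z w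
    show (inner ℂ (M z) w : ℂ) = inner ℂ z (M w)
    rw [hMinner]
    have h2 : (inner ℂ z (M w) : ℂ) =
        inner ℂ (φ z).1 (adjoint T (φ w).2) + inner ℂ (φ z).2 (T (φ w).1) := rfl
    rw [h2, ContinuousLinearMap.adjoint_inner_left, ← ContinuousLinearMap.adjoint_inner_right,
      add_comm]
  have hDsa : IsSelfAdjoint D := by
    rw [ContinuousLinearMap.isSelfAdjoint_iff_isSymmetric]
    intro z w
    show (inner ℂ (D z) w : ℂ) = inner ℂ z (D w)
    rw [hDinner]
    have h2 : (inner ℂ z (D w) : ℂ) =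
        inner ℂ (φ z).1 (P (φ w).1) + inner ℂ (φ z).2 (Q (φ w).2) := rfl
    rw [h2, ← ContinuousLinearMap.adjoint_inner_right,
      hPpos.isSelfAdjoint.adjoint_eq, ← ContinuousLinearMap.adjoint_inner_right (A := Q),
      hQpos.isSelfAdjoint.adjoint_eq]
  have hDpos : D.IsPositive := by
    refine ⟨ContinuousLinearMap.isSelfAdjoint_iff_isSymmetric.mp hDsa, fun z => ?_⟩
    rw [ContinuousLinearMap.reApplyInnerSelf_apply, hDinner, map_add]
    exact add_nonneg (hPpos.re_inner_nonneg_left _) (hQpos.re_inner_nonneg_left _)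
  have hDD : D * D = M * M := by
    have hP2 : ∀ u, P (P u) = adjoint T (T u) := fun u =>
      congrFun (congrArg DFunLike.coe hPP) u
    have hQ2 : ∀ u, Q (Q u) = T (adjoint T u) := fun u =>
      congrFun (congrArg DFunLike.coe hQQ) u
    ext z
    show φ.symm (P (P (φ z).1), Q (Q (φ z).2)) = φ.symm (adjoint T (T (φ z).1), T (adjoint T (φ z).2))
    rw [hP2, hQ2]
  have hMD : M ≤ D := by
    have := aux_sa_le_sqrt M hMsa
    rwa [← hDD, CFC.sqrt_unique rfl ((ContinuousLinearMap.nonneg_iff_isPositive D).mpr hDpos)]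
      at this
  have hpos := ((ContinuousLinearMap.le_def M D).mp hMD).re_inner_nonneg_left (φ.symm (x, y))
  have hφ : φ (φ.symm (x, y)) = (x, y) := φ.apply_symm_apply _
  have hsub : RCLike.re (inner ℂ ((D - M) (φ.symm (x, y))) (φ.symm (x, y)) : ℂ)
      = (Complex.re (inner ℂ (P x) x : ℂ) + Complex.re (inner ℂ (Q y) y : ℂ))
        - (Complex.re (inner ℂ (adjoint T y) x : ℂ) + Complex.re (inner ℂ (T x) y : ℂ)) := by
    rw [ContinuousLinearMap.sub_apply, inner_sub_left, map_sub, hMinner, hDinner, hφ,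
      map_add, map_add]
    simp [RCLike.re_eq_complex_re]
  rw [hsub] at hpos
  have hadj : Complex.re (inner ℂ (adjoint T y) x : ℂ) = Complex.re (inner ℂ (T x) y : ℂ) := by
    rw [ContinuousLinearMap.adjoint_inner_left, ← inner_conj_symm, Complex.conj_re]
  linarith [hpos, hadj]

theorem numRad_im_bound (T : H →L[ℂ] H) :
    numRad ((1 / 2 : ℂ) • (CFC.sqrt (adjoint T ∘L T) - CFC.sqrt (T ∘L adjoint T)) +
        Complex.I • (((2 : ℂ) * Complex.I)⁻¹ • (T - adjoint T))) ≤
      (1 / 2) * ‖CFC.sqrt (adjoint T ∘L T) + CFC.sqrt (T ∘L adjoint T)‖ := by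
  set P : H →L[ℂ] H := CFC.sqrt (adjoint T ∘L T) with hPdef
  set Q : H →L[ℂ] H := CFC.sqrt (T ∘L adjoint T) with hQdef
  have hP : (0 : H →L[ℂ] H) ≤ P := CFC.sqrt_nonneg _
  have hQ : (0 : H →L[ℂ] H) ≤ Q := CFC.sqrt_nonneg _
  have hPpos : P.IsPositive := (ContinuousLinearMap.nonneg_iff_isPositive P).mp hP
  have hQpos : Q.IsPositive := (ContinuousLinearMap.nonneg_iff_isPositive Q).mp hQ
  have hZ : (1/2 : ℂ) • (P - Q) + Complex.I • (((2:ℂ)*Complex.I)⁻¹ • (T - adjoint T))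
      = (1/2 : ℂ) • (P - Q + (T - adjoint T)) := by
    have hc : Complex.I * ((2:ℂ)*Complex.I)⁻¹ = 1/2 := by
      rw [mul_inv, ← mul_assoc, mul_comm Complex.I, mul_assoc,
        mul_inv_cancel₀ Complex.I_ne_zero, mul_one]
      norm_num
    rw [smul_smul, hc, smul_add]
  rw [hZ]
  rcases isEmpty_or_nonempty {x : H // ‖x‖ = 1} with hE | hE
  · rw [numRad, Real.iSup_of_isEmpty]
    positivity
  · refine ciSup_le fun u => ?_
    obtain ⟨x, hx⟩ := u
    set a : ℝ := (inner ℂ (P x) x : ℂ).re with hadef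
    set b : ℝ := (inner ℂ (Q x) x : ℂ).re with hbdef
    set w : ℂ := (inner ℂ (T x) x : ℂ) with hwdef
    have ha : 0 ≤ a := hPpos.re_inner_nonneg_left x
    have hb : 0 ≤ b := hQpos.re_inner_nonneg_left x
    have hkey : ∀ s : ℝ, 2 * (s * w.im) ≤ a + s^2 * b := by
      intro s
      have h := aux_key T x ((-(Complex.I * (s:ℂ))) • x)
      rw [inner_smul_right, map_smul, inner_smul_left, inner_smul_right, ← mul_assoc] at h
      have hc1 : (starRingEnd ℂ) (-(Complex.I * (s:ℂ))) * (-(Complex.I * (s:ℂ)))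
          = ((s^2 : ℝ) : ℂ) := by
        calc (starRingEnd ℂ) (-(Complex.I * (s:ℂ))) * (-(Complex.I * (s:ℂ)))
            = -(Complex.I^2) * ((s:ℂ) * (s:ℂ)) := by
              rw [map_neg, map_mul, Complex.conj_I, Complex.conj_ofReal]; ring
          _ = ((s^2 : ℝ) : ℂ) := by rw [Complex.I_sq]; push_cast; ring
      rw [hc1, Complex.re_ofReal_mul] at h
      have hc2 : ((-(Complex.I * (s:ℂ))) * w).re = s * w.im := by
        simp [Complex.mul_re, Complex.mul_im]
      rw [hc2] at h
      rw [← hPdef, ← hQdef, ← hadef, ← hbdef] at h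
      linarith
    have ht2 : w.im^2 ≤ a * b := by
      rcases eq_or_lt_of_le hb with hb0 | hb0
      · have him : w.im = 0 := by
          by_contra hne
          have h1 := hkey ((a+1)/(2*w.im))
          rw [← hb0, mul_zero, add_zero, ← mul_assoc] at h1
          have h2 : 2 * ((a+1)/(2*w.im)) * w.im = a + 1 := by field_simp
          linarith
        rw [him, ← hb0]
        simp
      · have h2 : w.im^2 / b ≤ a := by
          have h1 := hkey (w.im / b)
          have e1 : w.im / b * w.im = w.im^2 / b := by ring
          have e2 : (w.im / b)^2 * b = w.im^2 / b := by
            field_simp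
          rw [e1, e2] at h1
          have : 0 < w.im^2/b ∨ w.im^2/b = 0 := by
            rcases eq_or_lt_of_le (div_nonneg (sq_nonneg w.im) hb) with h | h
            · exact Or.inr h.symm
            · exact Or.inl h
          linarith
        rwa [div_le_iff₀ hb0] at h2
    -- value of the quadratic form
    have hPreal : ((inner ℂ (P x) x : ℂ)) = (a : ℂ) := by
      have h := (((ContinuousLinearMap.isPositive_iff_complex P).mp hPpos x).1).symm
      rw [RCLike.re_eq_complex_re] at h
      exact h
    have hQreal : ((inner ℂ (Q x) x : ℂ)) = (b : ℂ) := by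
      have h := (((ContinuousLinearMap.isPositive_iff_complex Q).mp hQpos x).1).symm
      rw [RCLike.re_eq_complex_re] at h
      exact h
    have hadjx : (inner ℂ (adjoint T x) x : ℂ) = (starRingEnd ℂ) w := by
      rw [ContinuousLinearMap.adjoint_inner_left, hwdef, ← inner_conj_symm]
    have hzval : (inner ℂ (((1/2:ℂ) • (P - Q + (T - adjoint T))) x) x : ℂ)
        = (1/2 : ℂ) * ((a:ℂ) - (b:ℂ) + (w - (starRingEnd ℂ) w)) := by
      rw [ContinuousLinearMap.smul_apply, inner_smul_left]
      congr 1
      · rw [map_div₀, map_one, map_ofNat]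
      · simp only [ContinuousLinearMap.add_apply, ContinuousLinearMap.sub_apply,
          inner_add_left, inner_sub_left, hPreal, hQreal, hadjx, hwdef]
    set z : ℂ := (inner ℂ (((1/2:ℂ) • (P - Q + (T - adjoint T))) x) x : ℂ) with hzdef
    have hre : z.re = (a - b)/2 := by
      rw [hzval]
      simp [Complex.mul_re, Complex.add_re, Complex.sub_re, Complex.conj_re, Complex.conj_im]
      ring
    have him : z.im = w.im := by
      rw [hzval]
      simp [Complex.mul_im, Complex.add_im, Complex.sub_im, Complex.conj_re, Complex.conj_im]
      ring
    have hn2 : ‖z‖^2 = z.re^2 + z.im^2 := by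
      rw [Complex.sq_norm, Complex.normSq_apply]
      ring
    have hub : a + b ≤ ‖P + Q‖ := by
      have h1 : ((inner ℂ ((P + Q) x) x : ℂ)).re = a + b := by
        rw [ContinuousLinearMap.add_apply, inner_add_left, Complex.add_re]
      calc a + b = ((inner ℂ ((P + Q) x) x : ℂ)).re := h1.symm
        _ ≤ ‖(inner ℂ ((P + Q) x) x : ℂ)‖ := Complex.re_le_norm _
        _ ≤ ‖(P + Q) x‖ * ‖x‖ := norm_inner_le_norm _ _
        _ ≤ ‖P + Q‖ * ‖x‖ * ‖x‖ := by
            have := (P + Q).le_opNorm x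
            nlinarith [norm_nonneg x]
        _ = ‖P + Q‖ := by rw [hx]; ring
    have hzb : ‖z‖ ≤ (a + b)/2 := by
      have h2 : ‖z‖^2 ≤ ((a+b)/2)^2 := by
        rw [hn2, hre, him]
        nlinarith [ht2]
      nlinarith [norm_nonneg z, ha, hb]
    calc ‖z‖ ≤ (a + b)/2 := hzb
      _ ≤ ‖P + Q‖ / 2 := by linarith
      _ = 1/2 * ‖P + Q‖ := by ring
end

section
/- Let T be a bounded operator on a complex Hilbert space H. Then w((|T| − |T*|)/2 + i·Im T) ≤ (‖T‖ + w(T))/2, where w is the numerical radius. -/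
set_option maxHeartbeats 1000000
set_option synthInstance.maxHeartbeats 200000

open scoped ComplexOrder
open ContinuousLinearMap (adjoint)

variable {H K : Type*} [NormedAddCommGroup H] [InnerProductSpace ℂ H] [CompleteSpace H]
  [NormedAddCommGroup K] [InnerProductSpace ℂ K] [CompleteSpace K]

set_option linter.unusedSectionVars false

lemma my_pos_adj_comp_self (T : H →L[ℂ] H) : 0 ≤ adjoint T ∘L T := by
  rw [ContinuousLinearMap.nonneg_iff_isPositive]
  constructor
  · rw [← ContinuousLinearMap.isSelfAdjoint_iff_isSymmetric, ContinuousLinearMap.isSelfAdjoint_iff']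
    rw [ContinuousLinearMap.adjoint_comp, ContinuousLinearMap.adjoint_adjoint]
  · intro x
    simp only [ContinuousLinearMap.reApplyInnerSelf, ContinuousLinearMap.comp_apply,
      ContinuousLinearMap.adjoint_inner_left]
    rw [inner_self_eq_norm_sq]
    positivity

lemma my_sqrt_facts (T : H →L[ℂ] H) (x : H) :
    Complex.im (inner ℂ ((CFC.sqrt (adjoint T ∘L T)) x) x : ℂ) = 0 ∧
    0 ≤ Complex.re (inner ℂ ((CFC.sqrt (adjoint T ∘L T)) x) x : ℂ) ∧
    Complex.re (inner ℂ ((CFC.sqrt (adjoint T ∘L T)) x) x : ℂ) ≤ ‖T x‖ * ‖x‖ ∧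
    ‖T x‖ ^ 2 ≤ ‖T‖ * Complex.re (inner ℂ ((CFC.sqrt (adjoint T ∘L T)) x) x : ℂ) := by
  set A : H →L[ℂ] H := CFC.sqrt (adjoint T ∘L T) with hA
  have hTT : (0 : H →L[ℂ] H) ≤ adjoint T ∘L T := my_pos_adj_comp_self T
  have hApos : (0 : H →L[ℂ] H) ≤ A := CFC.sqrt_nonneg _
  have hAP : A.IsPositive := (ContinuousLinearMap.nonneg_iff_isPositive A).mp hApos
  have hadj : adjoint A = A := hAP.isSelfAdjoint
  have hAsq : A * A = adjoint T ∘L T := by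
    have := CFC.sq_sqrt (adjoint T ∘L T) hTT
    rwa [sq] at this
  have hsymm : ∀ y z : H, (inner ℂ (A y) z : ℂ) = inner ℂ y (A z) := by
    intro y z
    conv_lhs => rw [← hadj, ContinuousLinearMap.adjoint_inner_left]
  have hnorm : ‖A x‖ = ‖T x‖ := by
    have h1 : (inner ℂ (A x) (A x) : ℂ) = inner ℂ (T x) (T x) := by
      rw [hsymm x (A x),
        show A (A x) = (adjoint T ∘L T) x from by rw [← ContinuousLinearMap.mul_apply, hAsq],
        ContinuousLinearMap.comp_apply, ContinuousLinearMap.adjoint_inner_right]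
    rw [inner_self_eq_norm_sq_to_K, inner_self_eq_norm_sq_to_K] at h1
    have h2 : ‖A x‖ ^ 2 = ‖T x‖ ^ 2 := by exact_mod_cast h1
    exact (pow_left_inj₀ (norm_nonneg _) (norm_nonneg _) two_ne_zero).mp h2
  have hre : Complex.im (inner ℂ (A x) x : ℂ) = 0 := by
    have h := hsymm x x
    rw [← inner_conj_symm x (A x)] at h
    have := congrArg Complex.im h
    simp only [Complex.conj_im] at this
    linarith [this]
  refine ⟨hre, hAP.re_inner_nonneg_left x, ?_, ?_⟩
  · calc Complex.re (inner ℂ (A x) x : ℂ) ≤ ‖(inner ℂ (A x) x : ℂ)‖ := Complex.re_le_norm _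
      _ ≤ ‖A x‖ * ‖x‖ := norm_inner_le_norm _ _
      _ = ‖T x‖ * ‖x‖ := by rw [hnorm]
  · set R : H →L[ℂ] H := CFC.sqrt A with hR
    have hRpos : (0 : H →L[ℂ] H) ≤ R := CFC.sqrt_nonneg _
    have hRP : R.IsPositive := (ContinuousLinearMap.nonneg_iff_isPositive R).mp hRpos
    have hRadj : adjoint R = R := hRP.isSelfAdjoint
    have hRsq : R * R = A := by
      have := CFC.sq_sqrt A hApos
      rwa [sq] at this
    have hsymmR : ∀ y z : H, (inner ℂ (R y) z : ℂ) = inner ℂ y (R z) := by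
      intro y z
      conv_lhs => rw [← hRadj, ContinuousLinearMap.adjoint_inner_left]
    have hAx : A x = R (R x) := by rw [← ContinuousLinearMap.mul_apply, hRsq]
    have hRx : ‖R x‖ ^ 2 = Complex.re (inner ℂ (A x) x : ℂ) := by
      have h1 : (inner ℂ (A x) x : ℂ) = inner ℂ (R x) (R x) := by
        rw [hAx, hsymmR (R x) x]
      rw [h1, inner_self_eq_norm_sq_to_K]
      norm_cast
    have hnR : ‖R‖ * ‖R‖ = ‖A‖ := by
      rw [← CStarRing.norm_star_mul_self (x := R), ContinuousLinearMap.star_eq_adjoint,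
        hRadj, hRsq]
    have hnA : ‖A‖ = ‖T‖ := by
      have h1 : ‖A‖ * ‖A‖ = ‖T‖ * ‖T‖ := by
        rw [← CStarRing.norm_star_mul_self (x := A), ContinuousLinearMap.star_eq_adjoint,
          hadj, hAsq, ContinuousLinearMap.norm_adjoint_comp_self]
      have h2 := (pow_left_inj₀ (norm_nonneg A) (norm_nonneg T) two_ne_zero)
      rw [sq, sq] at h2
      exact h2.mp h1
    calc ‖T x‖ ^ 2 = ‖A x‖ ^ 2 := by rw [hnorm]
      _ = ‖R (R x)‖ ^ 2 := by rw [hAx]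
      _ ≤ (‖R‖ * ‖R x‖) ^ 2 := by
          have := R.le_opNorm (R x)
          exact pow_le_pow_left₀ (norm_nonneg _) this 2
      _ = (‖R‖ * ‖R‖) * ‖R x‖ ^ 2 := by ring
      _ = ‖T‖ * Complex.re (inner ℂ (A x) x : ℂ) := by rw [hnR, hnA, hRx]

lemma my_bdd (T : H →L[ℂ] H) :
    BddAbove (Set.range fun x : {x : H // ‖x‖ = 1} => ‖(inner ℂ (T x.1) x.1 : ℂ)‖) := by
  refine ⟨‖T‖, ?_⟩
  rintro r ⟨y, rfl⟩
  calc ‖(inner ℂ (T y.1) y.1 : ℂ)‖ ≤ ‖T y.1‖ * ‖y.1‖ := norm_inner_le_norm _ _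
    _ ≤ (‖T‖ * ‖y.1‖) * ‖y.1‖ := by
        gcongr; exact T.le_opNorm _
    _ = ‖T‖ := by rw [y.2]; ring

lemma my_inner_le_numRad (T : H →L[ℂ] H) (x : H) (hx : ‖x‖ = 1) :
    ‖(inner ℂ (T x) x : ℂ)‖ ≤ numRad T :=
  le_ciSup (my_bdd T) ⟨x, hx⟩

lemma my_numRad_le (T : H →L[ℂ] H) (M : ℝ) (hM : 0 ≤ M)
    (h : ∀ x : H, ‖x‖ = 1 → ‖(inner ℂ (T x) x : ℂ)‖ ≤ M) : numRad T ≤ M := by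
  unfold numRad
  rcases isEmpty_or_nonempty {x : H // ‖x‖ = 1} with hE | hE
  · rw [Real.iSup_of_isEmpty]; exact hM
  · exact ciSup_le fun x => h x.1 x.2

lemma my_numRad_le_norm (T : H →L[ℂ] H) : numRad T ≤ ‖T‖ := by
  refine my_numRad_le T ‖T‖ (norm_nonneg T) fun x hx => ?_
  calc ‖(inner ℂ (T x) x : ℂ)‖ ≤ ‖T x‖ * ‖x‖ := norm_inner_le_norm _ _
    _ ≤ (‖T‖ * ‖x‖) * ‖x‖ := by gcongr; exact T.le_opNorm _
    _ = ‖T‖ := by rw [hx]; ring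

lemma my_numRad_nonneg (T : H →L[ℂ] H) : 0 ≤ numRad T := by
  unfold numRad
  rcases isEmpty_or_nonempty {x : H // ‖x‖ = 1} with hE | hE
  · rw [Real.iSup_of_isEmpty]
  · obtain ⟨y⟩ := hE
    exact le_trans (norm_nonneg _) (le_ciSup (my_bdd T) y)

lemma my_key {a b c n w : ℝ} (hn0 : 0 ≤ n) (hw0 : 0 ≤ w) (hwn : w ≤ n)
    (ha0 : 0 ≤ a) (hb0 : 0 ≤ b) (han : a ≤ n) (hbn : b ≤ n)
    (hcan : c^2 ≤ n*a) (hcbn : c^2 ≤ n*b) (hc2w : c^2 ≤ w^2) :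
    ((a-b)/2)^2 + c^2 ≤ ((n+w)/2)^2 := by
  rcases hn0.eq_or_lt with hn' | hn'
  · have ha' : a = 0 := by nlinarith
    have hb' : b = 0 := by nlinarith
    have hc' : c = 0 := by nlinarith
    rw [ha', hb', hc']
    norm_num
    positivity
  · have h1 : 0 ≤ n^2 - c^2 - (n*a - n*b) := by
      nlinarith [mul_le_mul_of_nonneg_left han hn0]
    have h2 : 0 ≤ n^2 - c^2 + (n*a - n*b) := by
      nlinarith [mul_le_mul_of_nonneg_left hbn hn0]
    have h3 : (n*a - n*b)^2 ≤ (n^2 - c^2)^2 := by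
      nlinarith [mul_nonneg h1 h2]
    have h4 : c^2 ≤ n * w := by
      nlinarith [mul_le_mul_of_nonneg_left hwn hw0]
    have e2 : (n^2 + c^2)^2 ≤ (n^2 + n*w)^2 := by
      have hle : n^2 + c^2 ≤ n^2 + n*w := by linarith
      have hpos : (0:ℝ) ≤ n^2 + c^2 := by positivity
      exact pow_le_pow_left₀ hpos hle 2
    have key2 : n^2*(((a-b)/2)^2 + c^2) ≤ n^2*((n+w)/2)^2 := by
      nlinarith [h3, e2]
    exact le_of_mul_le_mul_left key2 (by positivity)

lemma my_arith {a b c n w : ℝ} (h3 : (n*a - n*b)^2 ≤ (n^2 - c^2)^2)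
    (e2 : (n^2 + c^2)^2 ≤ (n^2 + n*w)^2) :
    n^2*(((a-b)/2)^2 + c^2) ≤ n^2*((n+w)/2)^2 := by
  nlinarith [h3, e2]

theorem numRad_im_beta2_bound (T : H →L[ℂ] H) :
    numRad ((1 / 2 : ℂ) • (CFC.sqrt (adjoint T ∘L T) - CFC.sqrt (T ∘L adjoint T)) +
        Complex.I • (((2 : ℂ) * Complex.I)⁻¹ • (T - adjoint T))) ≤
      (‖T‖ + numRad T) / 2 := by
  set n := ‖T‖ with hn
  set w := numRad T with hw
  have hw0 : 0 ≤ w := my_numRad_nonneg T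
  have hwn : w ≤ n := my_numRad_le_norm T
  have hn0 : 0 ≤ n := norm_nonneg T
  refine my_numRad_le _ _ (by linarith) fun x hx => ?_
  -- facts
  obtain ⟨hima, ha0, haleq, hasq⟩ := my_sqrt_facts T x
  obtain ⟨himb, hb0, hbleq, hbsq⟩ := my_sqrt_facts (adjoint T) x
  rw [ContinuousLinearMap.adjoint_adjoint] at himb hb0 hbleq hbsq
  set A : H →L[ℂ] H := CFC.sqrt (adjoint T ∘L T) with hA
  set B : H →L[ℂ] H := CFC.sqrt (T ∘L adjoint T) with hB
  set a := Complex.re (inner ℂ (A x) x : ℂ) with ha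
  set b := Complex.re (inner ℂ (B x) x : ℂ) with hb
  set u := (inner ℂ (T x) x : ℂ) with hu
  set c := u.im with hc
  clear_value A B a b u c
  have hadjnorm : ‖adjoint T‖ = n := by
    rw [hn]
    exact ContinuousLinearMap.adjoint.norm_map T
  rw [hadjnorm] at hbsq
  rw [hx, mul_one] at haleq hbleq
  -- the inner ℂ product of S x with x
  have hconj : (inner ℂ ((adjoint T) x) x : ℂ) = (starRingEnd ℂ) u := by
    rw [ContinuousLinearMap.adjoint_inner_left, hu, inner_conj_symm]
  have hzre : (inner ℂ (((1 / 2 : ℂ) • (A - B) +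
      Complex.I • (((2 : ℂ) * Complex.I)⁻¹ • (T - adjoint T))) x) x : ℂ)
      = (((a - b)/2 : ℝ) : ℂ) + (c : ℝ) * Complex.I := by
    have hαa : (inner ℂ (A x) x : ℂ) = (a : ℂ) := by
      apply Complex.ext
      · simp [ha]
      · simp [hima]
    have hβb : (inner ℂ (B x) x : ℂ) = (b : ℂ) := by
      apply Complex.ext
      · simp [hb]
      · simp [himb]
    simp only [ContinuousLinearMap.add_apply, ContinuousLinearMap.smul_apply,
      ContinuousLinearMap.sub_apply, inner_add_left, inner_smul_left, inner_sub_left,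
      hconj, hαa, hβb, ← hu]
    rw [Complex.sub_conj, ← hc]
    simp only [map_inv₀, map_mul, Complex.conj_I, map_ofNat, map_div₀, map_one]
    rw [show ((2:ℂ) * -Complex.I)⁻¹ = Complex.I / 2 by
      rw [mul_inv, inv_neg, Complex.inv_I]; ring]
    push_cast
    linear_combination (-(c:ℂ) * Complex.I) * Complex.I_sq
  rw [hzre]
  have hM : 0 ≤ (n + w)/2 := by linarith
  have hnormz : ‖(((a - b)/2 : ℝ) : ℂ) + (c : ℝ) * Complex.I‖ ^ 2 = ((a-b)/2)^2 + c^2 := by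
    rw [Complex.sq_norm, Complex.normSq_apply]
    simp only [Complex.add_re, Complex.add_im, Complex.ofReal_re, Complex.ofReal_im,
      Complex.mul_re, Complex.mul_im, Complex.I_re, Complex.I_im]
    ring
  have hTxn : ‖T x‖ ≤ n := by
    have := T.le_opNorm x
    rwa [hx, mul_one] at this
  have hT'xn : ‖(adjoint T) x‖ ≤ n := by
    have := (adjoint T).le_opNorm x
    rwa [hx, mul_one, hadjnorm] at this
  have hcu : |c| ≤ ‖u‖ := by
    rw [hc]
    exact Complex.abs_im_le_norm u
  have hun : ‖u‖ ≤ ‖T x‖ := by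
    rw [hu]
    have := norm_inner_le_norm (𝕜 := ℂ) (T x) x
    rw [hx, mul_one] at this
    exact this
  have huq : ‖u‖ ≤ ‖(adjoint T) x‖ := by
    have h1 : ‖(starRingEnd ℂ) u‖ = ‖u‖ := RCLike.norm_conj u
    rw [← h1, ← hconj]
    have := norm_inner_le_norm (𝕜 := ℂ) ((adjoint T) x) x
    rw [hx, mul_one] at this
    exact this
  have huw : ‖u‖ ≤ w := by
    rw [hu, hw]
    exact my_inner_le_numRad T x hx
  have hc2 : c^2 ≤ ‖u‖^2 := by
    have := pow_le_pow_left₀ (abs_nonneg c) hcu 2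
    rwa [sq_abs] at this
  have hc2p : c^2 ≤ ‖T x‖^2 := hc2.trans (pow_le_pow_left₀ (norm_nonneg u) hun 2)
  have hc2q : c^2 ≤ ‖(adjoint T) x‖^2 := hc2.trans (pow_le_pow_left₀ (norm_nonneg u) huq 2)
  have hc2w : c^2 ≤ w^2 := hc2.trans (pow_le_pow_left₀ (norm_nonneg u) huw 2)
  have hcan : c^2 ≤ n * a := hc2p.trans hasq
  have hcbn : c^2 ≤ n * b := hc2q.trans hbsq
  have han : a ≤ n := haleq.trans hTxn
  have hbn : b ≤ n := hbleq.trans hT'xn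
  have key : ((a-b)/2)^2 + c^2 ≤ ((n+w)/2)^2 :=
    my_key hn0 hw0 hwn ha0 hb0 han hbn hcan hcbn hc2w
  have h5 : ‖(((a - b)/2 : ℝ) : ℂ) + (c : ℝ) * Complex.I‖ ^ 2 ≤ ((n+w)/2)^2 := by
    rw [hnormz]; exact key
  calc ‖(((a - b)/2 : ℝ) : ℂ) + (c : ℝ) * Complex.I‖
      = Real.sqrt (‖(((a - b)/2 : ℝ) : ℂ) + (c : ℝ) * Complex.I‖^2) :=
        (Real.sqrt_sq (norm_nonneg _)).symm
    _ ≤ Real.sqrt (((n+w)/2)^2) := Real.sqrt_le_sqrt h5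
    _ = (n+w)/2 := Real.sqrt_sq hM
end

section
/- For bounded operators X, Y on a complex Hilbert space H, let M = [[0, X],[Y*, 0]] on H ⊕ H. Then 2·w(M) = sup over θ ∈ ℝ of ‖X + e^{iθ} Y‖, where w is the numerical radius. -/
open scoped ComplexOrder
open ContinuousLinearMap (adjoint)

variable {H K : Type*} [NormedAddCommGroup H] [InnerProductSpace ℂ H] [CompleteSpace H]
  [NormedAddCommGroup K] [InnerProductSpace ℂ K] [CompleteSpace K]

/-! Write `a = ⟪X v, u⟫` and `b = ⟪Y v, u⟫`; the quadratic form of `M` at `(u, v)` is `a + conj b`.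
Choosing `θ` with `conj (exp (θ I)) * b = conj b` turns it into `⟪(X + exp (θ I) • Y) v, u⟫`, and
`‖u‖ ‖v‖ ≤ 1/2` on the unit sphere of `H × K` gives `2 w(M) ≤ sup_θ ‖X + exp (θ I) • Y‖`.
Conversely, for unit `u`, `v` a unimodular `z` aligning the arguments of `z a` and `conj (z b)`
makes the form at `(z u, v)` have modulus `‖a‖ + ‖b‖`, so `‖a‖ + ‖b‖ ≤ 2 w(M)`; this dominates
`‖⟪(X + c • Y) v, u⟫‖` for every unimodular `c`. -/

open Complex ComplexConjugate
open scoped InnerProductSpace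

namespace Complex

theorem exists_conj_exp_mul_I_mul_eq_conj (b : ℂ) : ∃ θ : ℝ, conj (exp (θ * I)) * b = conj b := by
  obtain ⟨β, hβ⟩ : ∃ β, β = b.arg := ⟨_, rfl⟩
  refine ⟨2 * β, ?_⟩
  rw [← norm_mul_exp_arg_mul_I b, ← hβ]
  simp only [map_mul, ← exp_conj, conj_ofReal, conj_I]
  rw [mul_left_comm, ← exp_add]
  push_cast
  ring_nf

theorem exists_norm_eq_one_norm_mul_add_conj_mul_eq (a b : ℂ) :
    ∃ z : ℂ, ‖z‖ = 1 ∧ ‖z * a + conj (z * b)‖ = ‖a‖ + ‖b‖ := by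
  obtain ⟨α, hα⟩ : ∃ α, α = a.arg := ⟨_, rfl⟩
  obtain ⟨β, hβ⟩ : ∃ β, β = b.arg := ⟨_, rfl⟩
  refine ⟨exp (↑(-(α + β) / 2) * I), norm_exp_ofReal_mul_I _, ?_⟩
  have hsum : exp (↑(-(α + β) / 2) * I) * a + conj (exp (↑(-(α + β) / 2) * I) * b)
      = (‖a‖ + ‖b‖ : ℝ) * exp (↑((α - β) / 2) * I) := by
    conv_lhs => rw [← norm_mul_exp_arg_mul_I a, ← norm_mul_exp_arg_mul_I b, ← hα, ← hβ]
    simp only [map_mul, ← exp_conj, conj_ofReal, conj_I]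
    rw [mul_left_comm, ← exp_add, mul_left_comm, ← exp_add]
    push_cast
    ring_nf
  rw [hsum, norm_mul, norm_exp_ofReal_mul_I, norm_real, Real.norm_of_nonneg (by positivity),
    mul_one]

end Complex

theorem norm_le_of_forall_norm_eq_one_norm_inner_le {E : Type*} [NormedAddCommGroup E]
    [InnerProductSpace ℂ E] {x : E} {C : ℝ} (hC : 0 ≤ C)
    (h : ∀ u : E, ‖u‖ = 1 → ‖⟪x, u⟫_ℂ‖ ≤ C) : ‖x‖ ≤ C := by
  rcases eq_or_ne x 0 with rfl | hx
  · simpa using hC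
  have := h _ (norm_smul_inv_norm (𝕜 := ℂ) hx)
  simp only [inner_smul_right, inner_self_eq_norm_sq_to_K, norm_mul, norm_inv, norm_pow,
    RCLike.norm_ofReal, abs_norm] at this
  rwa [sq, inv_mul_cancel_left₀ (norm_ne_zero_iff.2 hx)] at this

section numRad

variable {E : Type*} [NormedAddCommGroup E] [InnerProductSpace ℂ E]

theorem numRad_nonneg (T : E →L[ℂ] E) : 0 ≤ numRad T :=
  Real.iSup_nonneg fun _ => norm_nonneg _

theorem norm_inner_apply_self_le_numRad (T : E →L[ℂ] E) {x : E} (hx : ‖x‖ = 1) :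
    ‖⟪T x, x⟫_ℂ‖ ≤ numRad T := by
  refine le_ciSup (f := fun x : {x : E // ‖x‖ = 1} => ‖⟪T x.1, x.1⟫_ℂ‖) ⟨‖T‖, ?_⟩ ⟨x, hx⟩
  rintro _ ⟨⟨y, hy⟩, rfl⟩
  simpa [hy] using (norm_inner_le_norm (𝕜 := ℂ) (T y) y).trans
    (mul_le_mul_of_nonneg_right (T.le_opNorm y) (norm_nonneg y))

theorem norm_inner_apply_self_le_numRad_mul_sq (T : E →L[ℂ] E) (x : E) :
    ‖⟪T x, x⟫_ℂ‖ ≤ numRad T * ‖x‖ ^ 2 := by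
  rcases eq_or_ne x 0 with rfl | hx
  · simp
  have := norm_inner_apply_self_le_numRad T (norm_smul_inv_norm (𝕜 := ℂ) hx)
  simp only [map_smul, inner_smul_left, inner_smul_right, norm_mul, map_inv₀, RCLike.conj_ofReal,
    norm_inv, RCLike.norm_ofReal, abs_norm] at this
  rwa [← mul_assoc, ← mul_inv, ← sq, inv_mul_le_iff₀ (by positivity), mul_comm] at this

theorem numRad_le {T : E →L[ℂ] E} {C : ℝ} (hC : 0 ≤ C)
    (h : ∀ x : E, ‖x‖ = 1 → ‖⟪T x, x⟫_ℂ‖ ≤ C) : numRad T ≤ C :=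
  Real.iSup_le (fun x => h x.1 x.2) hC

end numRad

theorem bddAbove_range_norm_add_exp_mul_I_smul {E F : Type*} [NormedAddCommGroup E]
    [NormedSpace ℂ E] [NormedAddCommGroup F] [NormedSpace ℂ F] (X Y : E →L[ℂ] F) :
    BddAbove (Set.range fun θ : ℝ => ‖X + exp (θ * I) • Y‖) := by
  refine ⟨‖X‖ + ‖Y‖, ?_⟩
  rintro _ ⟨θ, rfl⟩
  calc ‖X + exp (θ * I) • Y‖ ≤ ‖X‖ + ‖exp (θ * I) • Y‖ := norm_add_le _ _
    _ = ‖X‖ + ‖Y‖ := by rw [norm_smul, norm_exp_ofReal_mul_I, one_mul]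

def IsOffDiag (X Y : K →L[ℂ] H) (M : WithLp 2 (H × K) →L[ℂ] WithLp 2 (H × K)) : Prop :=
  ∀ u v, M ((WithLp.equiv 2 (H × K)).symm (u, v)) =
    (WithLp.equiv 2 (H × K)).symm (X v, adjoint Y u)

section IsOffDiag

variable {X Y : K →L[ℂ] H} {M : WithLp 2 (H × K) →L[ℂ] WithLp 2 (H × K)}

theorem IsOffDiag.inner_apply_self (hM : IsOffDiag X Y M) (u : H) (v : K) :
    ⟪M ((WithLp.equiv 2 (H × K)).symm (u, v)), (WithLp.equiv 2 (H × K)).symm (u, v)⟫_ℂ =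
      ⟪X v, u⟫_ℂ + conj ⟪Y v, u⟫_ℂ := by
  rw [hM u v, WithLp.prod_inner_apply, inner_conj_symm]
  exact congrArg _ (ContinuousLinearMap.adjoint_inner_left Y v u)

theorem IsOffDiag.norm_inner_add_norm_inner_le_two_mul_numRad (hM : IsOffDiag X Y M)
    {u : H} {v : K} (hu : ‖u‖ = 1) (hv : ‖v‖ = 1) :
    ‖⟪X v, u⟫_ℂ‖ + ‖⟪Y v, u⟫_ℂ‖ ≤ 2 * numRad M := by
  obtain ⟨z, hz, hsum⟩ := exists_norm_eq_one_norm_mul_add_conj_mul_eq ⟪X v, u⟫_ℂ ⟪Y v, u⟫_ℂ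
  have hξ : ‖(WithLp.equiv 2 (H × K)).symm (z • u, v)‖ ^ 2 = 2 := by
    rw [WithLp.prod_norm_sq_eq_of_L2]
    simp only [WithLp.equiv_symm_apply, WithLp.toLp_fst, WithLp.toLp_snd, norm_smul, hz, hu, hv,
      mul_one, one_pow, one_add_one_eq_two]
  have := norm_inner_apply_self_le_numRad_mul_sq M ((WithLp.equiv 2 (H × K)).symm (z • u, v))
  rwa [hM.inner_apply_self, inner_smul_right, inner_smul_right, hsum, hξ, mul_comm] at this

theorem IsOffDiag.norm_add_smul_le_two_mul_numRad (hM : IsOffDiag X Y M)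
    {c : ℂ} (hc : ‖c‖ = 1) : ‖X + c • Y‖ ≤ 2 * numRad M := by
  have h2w : 0 ≤ 2 * numRad M := mul_nonneg zero_le_two (numRad_nonneg M)
  refine ContinuousLinearMap.opNorm_le_of_unit_norm h2w fun v hv => ?_
  refine norm_le_of_forall_norm_eq_one_norm_inner_le h2w fun u hu => ?_
  calc ‖⟪(X + c • Y) v, u⟫_ℂ‖ = ‖⟪X v, u⟫_ℂ + conj c * ⟪Y v, u⟫_ℂ‖ := by
        rw [add_apply, smul_apply, inner_add_left, inner_smul_left]
    _ ≤ ‖⟪X v, u⟫_ℂ‖ + ‖⟪Y v, u⟫_ℂ‖ := by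
        simpa [hc] using norm_add_le ⟪X v, u⟫_ℂ (conj c * ⟪Y v, u⟫_ℂ)
    _ ≤ 2 * numRad M := hM.norm_inner_add_norm_inner_le_two_mul_numRad hu hv

theorem IsOffDiag.two_mul_numRad_le (hM : IsOffDiag X Y M) :
    2 * numRad M ≤ ⨆ θ : ℝ, ‖X + exp (θ * I) • Y‖ := by
  set S := ⨆ θ : ℝ, ‖X + exp (θ * I) • Y‖
  have hS : ∀ θ : ℝ, ‖X + exp (θ * I) • Y‖ ≤ S :=
    le_ciSup (bddAbove_range_norm_add_exp_mul_I_smul X Y)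
  suffices numRad M ≤ S / 2 by linarith
  refine numRad_le (div_nonneg ((norm_nonneg _).trans (hS 0)) zero_le_two) fun ξ hξ => ?_
  set u := ξ.fst
  set v := ξ.snd
  have huv : 2 * (‖u‖ * ‖v‖) ≤ 1 := by
    have := WithLp.prod_norm_sq_eq_of_L2 ξ
    rw [hξ] at this
    nlinarith [two_mul_le_add_sq ‖u‖ ‖v‖]
  obtain ⟨θ, hθ⟩ := exists_conj_exp_mul_I_mul_eq_conj ⟪Y v, u⟫_ℂ
  have hMξ : ⟪M ξ, ξ⟫_ℂ = ⟪(X + exp (θ * I) • Y) v, u⟫_ℂ := by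
    rw [add_apply, smul_apply, inner_add_left, inner_smul_left, hθ]
    exact hM.inner_apply_self u v
  calc ‖⟪M ξ, ξ⟫_ℂ‖ ≤ ‖X + exp (θ * I) • Y‖ * ‖v‖ * ‖u‖ := by
        rw [hMξ]
        exact (norm_inner_le_norm _ _).trans
          (mul_le_mul_of_nonneg_right (ContinuousLinearMap.le_opNorm _ _) (norm_nonneg _))
    _ ≤ S / 2 := by
        nlinarith [hS θ, norm_nonneg (X + exp (θ * I) • Y), norm_nonneg u, norm_nonneg v]

end IsOffDiag

theorem two_numRad_offdiag (X Y : H →L[ℂ] H)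
    (M : WithLp 2 (H × H) →L[ℂ] WithLp 2 (H × H))
    (hM : ∀ u v : H, M ((WithLp.equiv 2 (H × H)).symm (u, v)) =
      (WithLp.equiv 2 (H × H)).symm (X v, adjoint Y u)) :
    2 * numRad M = ⨆ θ : ℝ, ‖X + Complex.exp (θ * Complex.I) • Y‖ :=
  le_antisymm (IsOffDiag.two_mul_numRad_le hM) <|
    Real.iSup_le (fun θ =>
      IsOffDiag.norm_add_smul_le_two_mul_numRad hM (norm_exp_ofReal_mul_I θ))
      (mul_nonneg zero_le_two (numRad_nonneg M))
end
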